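/- arXiv:2102.07576 — 4 statements merged into one kernel-verified Lean document; each statement's English description precedes it below -/
import Mathlib

section
/- Let G be a simple graph with maximum degree Δ(G). If there exists a vertex u of G with deg(u) = Δ(G) such that every neighbor of u has degree greater than 1, then λ(G) ≥ Δ(G) + 1. -/
/-- The edge-distinguishing chromatic number of a simple graph `G`. -/
noncomputable def edcn {V : Type*} [Fintype V] (G : SimpleGraph V) : ℕ :=
  sInf {k | ∃ c : V → Fin k, Set.InjOn (Sym2.map c) G.edgeSet}

theorem edcn_ge_maxDegree_succ {V : Type*} [Fintype V] (G : SimpleGraph V)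
    [DecidableRel G.Adj] (u : V) (hu : G.degree u = G.maxDegree)
    (hnb : ∀ v, G.Adj u v → 1 < G.degree v) :
    G.maxDegree + 1 ≤ edcn G := by
  classical
  have hne : {k | ∃ c : V → Fin k, Set.InjOn (Sym2.map c) G.edgeSet}.Nonempty := by
    refine ⟨Fintype.card V, (Fintype.equivFin V : V → Fin (Fintype.card V)), ?_⟩
    exact (Sym2.map.injective (Fintype.equivFin V).injective).injOn
  refine le_csInf hne ?_
  rintro k ⟨c, hc⟩
  by_contra hlt
  push_neg at hlt
  have hk : k ≤ G.maxDegree := by omega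
  -- c is injective on neighbors of u
  have hinj : Set.InjOn c (G.neighborFinset u : Set V) := by
    intro v hv w hw hvw
    simp only [Finset.mem_coe, SimpleGraph.mem_neighborFinset] at hv hw
    have h1 : (s(u, v) : Sym2 V) ∈ G.edgeSet := G.mem_edgeSet.mpr hv
    have h2 : (s(u, w) : Sym2 V) ∈ G.edgeSet := G.mem_edgeSet.mpr hw
    have := hc h1 h2 (by simp [hvw])
    rw [Sym2.eq_iff] at this
    rcases this with ⟨_, h⟩ | ⟨h1', h2'⟩
    · exact h
    · exact absurd h2'.symm (G.ne_of_adj hv)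
  have hcard : (Finset.image c (G.neighborFinset u)).card = G.maxDegree := by
    rw [Finset.card_image_of_injOn hinj, ← hu, SimpleGraph.card_neighborFinset_eq_degree]
  have himg : Finset.image c (G.neighborFinset u) = Finset.univ := by
    apply Finset.eq_univ_of_card
    rw [hcard, Fintype.card_fin]
    have : G.maxDegree ≤ k := by
      rw [← hcard]
      calc (Finset.image c (G.neighborFinset u)).card ≤ Fintype.card (Fin k) :=
            Finset.card_le_univ _
        _ = k := Fintype.card_fin k
    omega
  -- get neighbor v with c v = c u
  have hcu : c u ∈ Finset.image c (G.neighborFinset u) := himg ▸ Finset.mem_univ _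
  obtain ⟨v, hv, hcv⟩ := Finset.mem_image.mp hcu
  rw [SimpleGraph.mem_neighborFinset] at hv
  -- v has another neighbor w ≠ u
  have hdv : 1 < (G.neighborFinset v).card := by
    rw [SimpleGraph.card_neighborFinset_eq_degree]; exact hnb v hv
  obtain ⟨w, hw, hwu⟩ := Finset.exists_mem_ne hdv u
  rw [SimpleGraph.mem_neighborFinset] at hw
  -- get neighbor x of u with c x = c w
  have hcw : c w ∈ Finset.image c (G.neighborFinset u) := himg ▸ Finset.mem_univ _
  obtain ⟨x, hx, hcx⟩ := Finset.mem_image.mp hcw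
  rw [SimpleGraph.mem_neighborFinset] at hx
  have h1 : (s(v, w) : Sym2 V) ∈ G.edgeSet := G.mem_edgeSet.mpr hw
  have h2 : (s(u, x) : Sym2 V) ∈ G.edgeSet := G.mem_edgeSet.mpr hx
  have heq : (s(v, w) : Sym2 V) = s(u, x) := by
    apply hc h1 h2
    simp only [Sym2.map_pair_eq]
    rw [hcv, hcx]
  rw [Sym2.eq_iff] at heq
  rcases heq with ⟨h1', _⟩ | ⟨_, h2'⟩
  · exact G.ne_of_adj hv h1'.symm
  · exact hwu h2'
end

section
/- Let k be odd and c_2 ≤ c_3 positive integers. The petal graph P_{1,c_2,c_3} (one loop and two cycles of lengths c_2 and c_3 sharing a common vertex) can be embedded in K_k^* if and only if c_2 ≥ 3 and 1 + c_2 + c_3 ≤ C(k+1,2). -/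
/-- Vertex at position `i` of a petal (cycle) of length `c` through the
central vertex `0`, whose internal vertices are `base + 1, …, base + c - 1`. -/
def cycV (base c : ℕ) (i : ℕ) : ℕ := if i % c = 0 then 0 else base + i

/-- The edges of the petal graph `P_{1,c₂,c₃}`, indexed so that multiple
edges/loops are kept distinct: one loop at the central vertex `0`, a cycle of
length `c₂` through `0`, and a cycle of length `c₃` through `0`. -/
def petalEdge (c₂ c₃ : ℕ) : Unit ⊕ Fin c₂ ⊕ Fin c₃ → Sym2 ℕ
  | Sum.inl _ => s(0, 0)
  | Sum.inr (Sum.inl i) => s(cycV 0 c₂ i, cycV 0 c₂ (i + 1))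
  | Sum.inr (Sum.inr i) => s(cycV (c₂ - 1) c₃ i, cycV (c₂ - 1) c₃ (i + 1))

/-- A graph given by an indexed family of edges embeds in `K_k^*` (the
complete graph on `k` vertices with a loop at each vertex) iff there is a
vertex map under which the images of the edges are pairwise distinct. -/
def FamEmbedsInKStar {V ι : Type*} (ed : ι → Sym2 V) (k : ℕ) : Prop :=
  ∃ f : V → Fin k, Function.Injective fun e => Sym2.map f (ed e)


def Good (k a b : ℕ) : Prop :=
  ∃ w : ℕ → ℕ, (∀ i, w i < k) ∧ w 0 = 0 ∧ w a = 0 ∧ w (a + b) = 0 ∧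
    (∀ i, i < a + b → ¬(w i = 0 ∧ w (i+1) = 0)) ∧
    (∀ i j, i < a + b → j < a + b → s(w i, w (i+1)) = s(w j, w (j+1)) → i = j)

def elist (l : List ℕ) : List (ℕ × ℕ) :=
  (l.zip l.tail).map (fun p => (min p.1 p.2, max p.1 p.2))

def chk (k a b : ℕ) (l : List ℕ) : Prop :=
  l.length = a + b + 1 ∧ (∀ u ∈ l, u < k) ∧ l.getD 0 1 = 0 ∧ l.getD a 1 = 0 ∧
    l.getD (a+b) 1 = 0 ∧ (elist l).Nodup ∧ (0,0) ∉ elist l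

instance (k a b : ℕ) (l : List ℕ) : Decidable (chk k a b l) := by
  unfold chk; infer_instance

lemma elist_len (l : List ℕ) : (elist l).length = l.length - 1 := by
  simp [elist]

lemma elist_get (l : List ℕ) (i : ℕ) (h : i + 1 < l.length) :
    (elist l)[i]'(by rw [elist_len]; omega) = (min l[i] l[i+1], max l[i] l[i+1]) := by
  simp only [elist, List.getElem_map, List.getElem_zip, List.getElem_tail]

lemma Good.ofChk (k a b : ℕ) (l : List ℕ) (h : chk k a b l) : Good k a b := by
  obtain ⟨hlen, hlt, h0, ha, hab, hnd, hnl⟩ := h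
  have hlpos : 0 < l.length := by omega
  set w : ℕ → ℕ := fun i => l.getD i 0 with hw
  have hget : ∀ i (hi : i < l.length), w i = l[i]'hi := by
    intro i hi; simp [hw, List.getD_eq_getElem?_getD, List.getElem?_eq_getElem hi]
  have h0' : w 0 = 0 := by
    rw [hget 0 hlpos]; rw [List.getD_eq_getElem?_getD, List.getElem?_eq_getElem hlpos] at h0
    simpa using h0
  have hk : 0 < k := by
    have := hlt (l[0]) (List.getElem_mem _)
    rw [hget 0 hlpos] at h0'; omega
  refine ⟨w, ?_, h0', ?_, ?_, ?_, ?_⟩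
  · intro i
    by_cases hi : i < l.length
    · rw [hget i hi]; exact hlt _ (List.getElem_mem _)
    · simp [hw, List.getD_eq_getElem?_getD, List.getElem?_eq_none (by omega : l.length ≤ i)]
      omega
  · rw [hget a (by omega)]
    rw [List.getD_eq_getElem?_getD, List.getElem?_eq_getElem (by omega : a < l.length)] at ha
    simpa using ha
  · rw [hget (a+b) (by omega)]
    rw [List.getD_eq_getElem?_getD, List.getElem?_eq_getElem (by omega : a+b < l.length)] at hab
    simpa using hab
  · intro i hi ⟨hz1, hz2⟩
    apply hnl
    have : (elist l)[i]'(by rw [elist_len]; omega) = (0,0) := by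
      rw [elist_get l i (by omega)]
      rw [hget i (by omega)] at hz1; rw [hget (i+1) (by omega)] at hz2
      simp [hz1, hz2]
    rw [← this]; exact List.getElem_mem _
  · intro i j hi hj heq
    have hi1 : i + 1 < l.length := by omega
    have hj1 : j + 1 < l.length := by omega
    rw [Sym2.eq_iff] at heq
    have : (elist l)[i]'(by rw [elist_len]; omega) = (elist l)[j]'(by rw [elist_len]; omega) := by
      rw [elist_get l i hi1, elist_get l j hj1]
      rw [← hget i (by omega), ← hget (i+1) (by omega), ← hget j (by omega), ← hget (j+1) (by omega)]
      rcases heq with ⟨e1, e2⟩ | ⟨e1, e2⟩ <;> rw [e1, e2]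
      · rw [min_comm, max_comm]
    exact hnd.getElem_inj_iff.mp this
lemma Good.mono {k k' a b : ℕ} (h : Good k a b) (hk : k ≤ k') : Good k' a b := by
  obtain ⟨w, h1, h⟩ := h
  exact ⟨w, fun i => lt_of_lt_of_le (h1 i) hk, h⟩

lemma Good.swap {k a b : ℕ} (h : Good k a b) : Good k b a := by
  obtain ⟨w, hb, h0, ha, hab, hnl, hinj⟩ := h
  set n := a + b with hndef
  set σ : ℕ → ℕ := fun i => if i < b then i + a else i - b with hσ
  set w' : ℕ → ℕ := fun i => if i < b then w (i + a) else if i ≤ n then w (i - b) else 0 with hw'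
  have hσlt : ∀ i, i < n → σ i < n := by intro i hi; simp only [hσ]; split <;> omega
  have hwn : w n = 0 := hab
  have heq : ∀ i, i < n → s(w' i, w' (i+1)) = s(w (σ i), w (σ i + 1)) := by
    intro i hi
    simp only [hw', hσ]
    by_cases h1 : i < b
    · simp only [if_pos h1]
      by_cases h2 : i + 1 < b
      · rw [if_pos h2, show i + 1 + a = i + a + 1 by omega]
      · have hib : i + 1 = b := by omega
        rw [if_neg h2, if_pos (by omega : i + 1 ≤ n)]
        have e1 : w (i + 1 - b) = 0 := by rw [show i + 1 - b = 0 by omega]; exact h0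
        have e2 : w (i + a + 1) = 0 := by rw [show i + a + 1 = n by omega]; exact hwn
        rw [e1, e2]
    · simp only [if_neg h1, if_pos (show i ≤ n by omega)]
      rw [if_neg (by omega : ¬ i + 1 < b), if_pos (by omega : i + 1 ≤ n),
        show i + 1 - b = i - b + 1 by omega]
  have hσinj : ∀ i j, i < n → j < n → σ i = σ j → i = j := by
    intro i j hi hj hs
    simp only [hσ] at hs; split at hs <;> split at hs <;> omega
  refine ⟨w', ?_, ?_, ?_, ?_, ?_, ?_⟩
  · intro i; simp only [hw']
    split
    · exact hb _
    · split
      · exact hb _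
      · have := hb 0; omega
  · simp only [hw']; split
    · rw [show 0 + a = a from by omega]; exact ha
    · simp only [if_pos (by omega : 0 ≤ n), show (0:ℕ) - b = 0 by omega]; exact h0
  · simp only [hw']; split
    · omega
    · rw [if_pos (by omega : b ≤ n), show b - b = 0 by omega]; exact h0
  · simp only [hw']
    rw [if_neg (by omega : ¬ b + a < b), if_pos (by omega : b + a ≤ n),
      show b + a - b = a by omega]
    exact ha
  · intro i hi hz
    have hi' : i < n := by omega
    have := heq i hi'
    rw [Sym2.eq_iff] at this
    have hnl' := hnl (σ i) (by rw [hndef]; exact hσlt i hi')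
    rcases this with ⟨u1, u2⟩ | ⟨u1, u2⟩ <;> [exact hnl' ⟨u1 ▸ hz.1, u2 ▸ hz.2⟩;
      exact hnl' ⟨u2 ▸ hz.2, u1 ▸ hz.1⟩]
  · intro i j hi hj hs
    have hi' : i < n := by omega
    have hj' : j < n := by omega
    rw [heq i hi', heq j hj'] at hs
    exact hσinj i j hi' hj' (hinj _ _ (hσlt i hi') (hσlt j hj') hs)
lemma base5_3 (b : ℕ) (h2 : 3 ≤ b) (h3 : b ≤ 11) : Good 5 3 b := by
  interval_cases b
  exacts [
    Good.ofChk 5 3 3 [0,1,2,0,3,4,0] (by decide),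
    Good.ofChk 5 3 4 [0,1,2,0,3,1,4,0] (by decide),
    Good.ofChk 5 3 5 [0,1,2,0,3,1,1,4,0] (by decide),
    Good.ofChk 5 3 6 [0,1,2,0,3,1,1,4,4,0] (by decide),
    Good.ofChk 5 3 7 [0,1,2,0,3,1,4,2,3,4,0] (by decide),
    Good.ofChk 5 3 8 [0,1,2,0,3,1,1,4,2,3,4,0] (by decide),
    Good.ofChk 5 3 9 [0,1,2,0,3,1,1,4,2,2,3,4,0] (by decide),
    Good.ofChk 5 3 10 [0,1,2,0,3,1,1,4,2,2,3,3,4,0] (by decide),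
    Good.ofChk 5 3 11 [0,1,2,0,3,1,1,4,2,2,3,3,4,4,0] (by decide)
  ]

lemma base5_4 (b : ℕ) (h2 : 4 ≤ b) (h3 : b ≤ 10) : Good 5 4 b := by
  interval_cases b
  exacts [
    Good.ofChk 5 4 4 [0,1,1,2,0,3,1,4,0] (by decide),
    Good.ofChk 5 4 5 [0,1,1,2,0,3,1,4,4,0] (by decide),
    Good.ofChk 5 4 6 [0,1,1,2,0,3,2,2,4,4,0] (by decide),
    Good.ofChk 5 4 7 [0,1,1,2,0,3,1,4,2,3,4,0] (by decide),
    Good.ofChk 5 4 8 [0,1,1,2,0,3,1,4,2,2,3,4,0] (by decide),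
    Good.ofChk 5 4 9 [0,1,1,2,0,3,1,4,2,2,3,3,4,0] (by decide),
    Good.ofChk 5 4 10 [0,1,1,2,0,3,1,4,2,2,3,3,4,4,0] (by decide)
  ]

lemma base5_5 (b : ℕ) (h2 : 5 ≤ b) (h3 : b ≤ 9) : Good 5 5 b := by
  interval_cases b
  exacts [
    Good.ofChk 5 5 5 [0,1,1,2,2,0,3,1,4,4,0] (by decide),
    Good.ofChk 5 5 6 [0,1,1,2,2,0,3,3,1,4,4,0] (by decide),
    Good.ofChk 5 5 7 [0,1,1,2,2,0,3,1,4,2,3,4,0] (by decide),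
    Good.ofChk 5 5 8 [0,1,1,2,2,0,3,1,4,2,3,3,4,0] (by decide),
    Good.ofChk 5 5 9 [0,1,1,2,2,0,3,1,4,2,3,3,4,4,0] (by decide)
  ]

lemma base5_6 (b : ℕ) (h2 : 6 ≤ b) (h3 : b ≤ 8) : Good 5 6 b := by
  interval_cases b
  exacts [
    Good.ofChk 5 6 6 [0,1,1,2,2,3,0,2,4,1,3,4,0] (by decide),
    Good.ofChk 5 6 7 [0,1,1,2,2,3,0,2,4,1,3,3,4,0] (by decide),
    Good.ofChk 5 6 8 [0,1,1,2,2,3,0,2,4,1,3,3,4,4,0] (by decide)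
  ]

lemma base5_7 (b : ℕ) (h2 : 7 ≤ b) (h3 : b ≤ 7) : Good 5 7 b := by
  interval_cases b
  exacts [
    Good.ofChk 5 7 7 [0,1,1,2,2,3,3,0,2,4,1,3,4,4,0] (by decide)
  ]

lemma base5 (a b : ℕ) (h1 : 3 ≤ a) (h2 : a ≤ b) (h3 : a + b ≤ 14) : Good 5 a b := by
  have ha2 : a ≤ 7 := by omega
  interval_cases a
  exacts [base5_3 b h2 (by omega), base5_4 b h2 (by omega), base5_5 b h2 (by omega), base5_6 b h2 (by omega), base5_7 b h2 (by omega)]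

lemma base7_3 (b : ℕ) (h2 : 3 ≤ b) (h3 : b ≤ 24) : Good 7 3 b := by
  interval_cases b
  exacts [
    Good.ofChk 7 3 3 [0,1,2,0,3,4,0] (by decide),
    Good.ofChk 7 3 4 [0,1,2,0,3,1,4,0] (by decide),
    Good.ofChk 7 3 5 [0,1,2,0,3,1,1,4,0] (by decide),
    Good.ofChk 7 3 6 [0,1,2,0,3,1,1,4,4,0] (by decide),
    Good.ofChk 7 3 7 [0,1,2,0,3,1,1,4,2,5,0] (by decide),
    Good.ofChk 7 3 8 [0,1,2,0,3,1,1,4,0,5,6,0] (by decide),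
    Good.ofChk 7 3 9 [0,1,2,0,3,1,1,4,0,5,1,6,0] (by decide),
    Good.ofChk 7 3 10 [0,1,2,0,3,1,1,4,0,5,1,6,6,0] (by decide),
    Good.ofChk 7 3 11 [0,1,2,0,3,1,1,4,0,5,2,2,3,6,0] (by decide),
    Good.ofChk 7 3 12 [0,1,2,0,3,1,1,4,0,5,1,6,2,3,6,0] (by decide),
    Good.ofChk 7 3 13 [0,1,2,0,3,1,1,4,0,5,1,6,2,2,3,6,0] (by decide),
    Good.ofChk 7 3 14 [0,1,2,0,3,1,1,4,0,5,1,6,2,2,3,3,6,0] (by decide),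
    Good.ofChk 7 3 15 [0,1,2,0,3,1,1,4,0,5,1,6,2,2,3,3,4,6,0] (by decide),
    Good.ofChk 7 3 16 [0,1,2,0,3,1,1,4,0,5,1,6,2,2,3,3,4,4,6,0] (by decide),
    Good.ofChk 7 3 17 [0,1,2,0,3,1,1,4,0,5,1,6,2,2,3,3,4,2,5,6,0] (by decide),
    Good.ofChk 7 3 18 [0,1,2,0,3,1,1,4,0,5,1,6,2,2,3,3,4,2,5,3,6,0] (by decide),
    Good.ofChk 7 3 19 [0,1,2,0,3,1,1,4,0,5,1,6,2,2,3,3,4,2,5,3,6,6,0] (by decide),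
    Good.ofChk 7 3 20 [0,1,2,0,3,1,1,4,0,5,1,6,2,2,3,3,4,2,5,4,4,6,6,0] (by decide),
    Good.ofChk 7 3 21 [0,1,2,0,3,1,1,4,0,5,1,6,2,2,3,3,4,2,5,3,6,4,5,6,0] (by decide),
    Good.ofChk 7 3 22 [0,1,2,0,3,1,1,4,0,5,1,6,2,2,3,3,4,2,5,3,6,4,4,5,6,0] (by decide),
    Good.ofChk 7 3 23 [0,1,2,0,3,1,1,4,0,5,1,6,2,2,3,3,4,2,5,3,6,4,4,5,5,6,0] (by decide),
    Good.ofChk 7 3 24 [0,1,2,0,3,1,1,4,0,5,1,6,2,2,3,3,4,2,5,3,6,4,4,5,5,6,6,0] (by decide)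
  ]

lemma base7_4 (b : ℕ) (h2 : 4 ≤ b) (h3 : b ≤ 23) : Good 7 4 b := by
  interval_cases b
  exacts [
    Good.ofChk 7 4 4 [0,1,1,2,0,3,1,4,0] (by decide),
    Good.ofChk 7 4 5 [0,1,1,2,0,3,1,4,4,0] (by decide),
    Good.ofChk 7 4 6 [0,1,1,2,0,3,1,4,2,5,0] (by decide),
    Good.ofChk 7 4 7 [0,1,1,2,0,3,1,4,0,5,6,0] (by decide),
    Good.ofChk 7 4 8 [0,1,1,2,0,3,1,4,0,5,1,6,0] (by decide),
    Good.ofChk 7 4 9 [0,1,1,2,0,3,1,4,0,5,1,6,6,0] (by decide),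
    Good.ofChk 7 4 10 [0,1,1,2,0,3,1,4,0,5,2,2,3,6,0] (by decide),
    Good.ofChk 7 4 11 [0,1,1,2,0,3,1,4,0,5,1,6,2,3,6,0] (by decide),
    Good.ofChk 7 4 12 [0,1,1,2,0,3,1,4,0,5,1,6,2,2,3,6,0] (by decide),
    Good.ofChk 7 4 13 [0,1,1,2,0,3,1,4,0,5,1,6,2,2,3,3,6,0] (by decide),
    Good.ofChk 7 4 14 [0,1,1,2,0,3,1,4,0,5,1,6,2,2,3,3,4,6,0] (by decide),
    Good.ofChk 7 4 15 [0,1,1,2,0,3,1,4,0,5,1,6,2,2,3,3,4,4,6,0] (by decide),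
    Good.ofChk 7 4 16 [0,1,1,2,0,3,1,4,0,5,1,6,2,2,3,3,4,2,5,6,0] (by decide),
    Good.ofChk 7 4 17 [0,1,1,2,0,3,1,4,0,5,1,6,2,2,3,3,4,2,5,3,6,0] (by decide),
    Good.ofChk 7 4 18 [0,1,1,2,0,3,1,4,0,5,1,6,2,2,3,3,4,2,5,3,6,6,0] (by decide),
    Good.ofChk 7 4 19 [0,1,1,2,0,3,1,4,0,5,1,6,2,2,3,3,4,2,5,4,4,6,6,0] (by decide),
    Good.ofChk 7 4 20 [0,1,1,2,0,3,1,4,0,5,1,6,2,2,3,3,4,2,5,3,6,4,5,6,0] (by decide),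
    Good.ofChk 7 4 21 [0,1,1,2,0,3,1,4,0,5,1,6,2,2,3,3,4,2,5,3,6,4,4,5,6,0] (by decide),
    Good.ofChk 7 4 22 [0,1,1,2,0,3,1,4,0,5,1,6,2,2,3,3,4,2,5,3,6,4,4,5,5,6,0] (by decide),
    Good.ofChk 7 4 23 [0,1,1,2,0,3,1,4,0,5,1,6,2,2,3,3,4,2,5,3,6,4,4,5,5,6,6,0] (by decide)
  ]

lemma base7_5 (b : ℕ) (h2 : 5 ≤ b) (h3 : b ≤ 22) : Good 7 5 b := by
  interval_cases b
  exacts [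
    Good.ofChk 7 5 5 [0,1,1,2,2,0,3,1,4,4,0] (by decide),
    Good.ofChk 7 5 6 [0,1,1,2,2,0,3,1,4,2,5,0] (by decide),
    Good.ofChk 7 5 7 [0,1,1,2,2,0,3,1,4,0,5,6,0] (by decide),
    Good.ofChk 7 5 8 [0,1,1,2,2,0,3,1,4,0,5,1,6,0] (by decide),
    Good.ofChk 7 5 9 [0,1,1,2,2,0,3,1,4,0,5,1,6,6,0] (by decide),
    Good.ofChk 7 5 10 [0,1,1,2,2,0,3,1,4,0,5,2,3,3,6,0] (by decide),
    Good.ofChk 7 5 11 [0,1,1,2,2,0,3,1,4,0,5,1,6,2,3,6,0] (by decide),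
    Good.ofChk 7 5 12 [0,1,1,2,2,0,3,1,4,0,5,1,6,2,3,3,6,0] (by decide),
    Good.ofChk 7 5 13 [0,1,1,2,2,0,3,1,4,0,5,1,6,2,3,3,4,6,0] (by decide),
    Good.ofChk 7 5 14 [0,1,1,2,2,0,3,1,4,0,5,1,6,2,3,3,4,4,6,0] (by decide),
    Good.ofChk 7 5 15 [0,1,1,2,2,0,3,1,4,0,5,1,6,2,3,3,4,2,5,6,0] (by decide),
    Good.ofChk 7 5 16 [0,1,1,2,2,0,3,1,4,0,5,1,6,2,3,3,4,2,5,3,6,0] (by decide),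
    Good.ofChk 7 5 17 [0,1,1,2,2,0,3,1,4,0,5,1,6,2,3,3,4,2,5,3,6,6,0] (by decide),
    Good.ofChk 7 5 18 [0,1,1,2,2,0,3,1,4,0,5,1,6,2,3,3,4,2,5,4,4,6,6,0] (by decide),
    Good.ofChk 7 5 19 [0,1,1,2,2,0,3,1,4,0,5,1,6,2,3,3,4,2,5,3,6,4,5,6,0] (by decide),
    Good.ofChk 7 5 20 [0,1,1,2,2,0,3,1,4,0,5,1,6,2,3,3,4,2,5,3,6,4,4,5,6,0] (by decide),
    Good.ofChk 7 5 21 [0,1,1,2,2,0,3,1,4,0,5,1,6,2,3,3,4,2,5,3,6,4,4,5,5,6,0] (by decide),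
    Good.ofChk 7 5 22 [0,1,1,2,2,0,3,1,4,0,5,1,6,2,3,3,4,2,5,3,6,4,4,5,5,6,6,0] (by decide)
  ]

lemma base7_6 (b : ℕ) (h2 : 6 ≤ b) (h3 : b ≤ 21) : Good 7 6 b := by
  interval_cases b
  exacts [
    Good.ofChk 7 6 6 [0,1,1,2,2,3,0,2,4,0,5,6,0] (by decide),
    Good.ofChk 7 6 7 [0,1,1,2,2,3,0,2,4,0,5,1,6,0] (by decide),
    Good.ofChk 7 6 8 [0,1,1,2,2,3,0,2,4,0,5,1,3,6,0] (by decide),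
    Good.ofChk 7 6 9 [0,1,1,2,2,3,0,2,4,0,5,1,3,3,6,0] (by decide),
    Good.ofChk 7 6 10 [0,1,1,2,2,3,0,2,4,0,5,1,3,3,4,6,0] (by decide),
    Good.ofChk 7 6 11 [0,1,1,2,2,3,0,2,4,0,5,1,3,3,4,1,6,0] (by decide),
    Good.ofChk 7 6 12 [0,1,1,2,2,3,0,2,4,0,5,1,3,3,4,1,6,6,0] (by decide),
    Good.ofChk 7 6 13 [0,1,1,2,2,3,0,2,4,0,5,1,3,3,4,4,1,6,6,0] (by decide),
    Good.ofChk 7 6 14 [0,1,1,2,2,3,0,2,4,0,5,1,3,3,4,1,6,2,5,6,0] (by decide),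
    Good.ofChk 7 6 15 [0,1,1,2,2,3,0,2,4,0,5,1,3,3,4,1,6,2,5,3,6,0] (by decide),
    Good.ofChk 7 6 16 [0,1,1,2,2,3,0,2,4,0,5,1,3,3,4,1,6,2,5,3,6,6,0] (by decide),
    Good.ofChk 7 6 17 [0,1,1,2,2,3,0,2,4,0,5,1,3,3,4,1,6,2,5,4,4,6,6,0] (by decide),
    Good.ofChk 7 6 18 [0,1,1,2,2,3,0,2,4,0,5,1,3,3,4,1,6,2,5,3,6,4,5,6,0] (by decide),
    Good.ofChk 7 6 19 [0,1,1,2,2,3,0,2,4,0,5,1,3,3,4,1,6,2,5,3,6,4,4,5,6,0] (by decide),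
    Good.ofChk 7 6 20 [0,1,1,2,2,3,0,2,4,0,5,1,3,3,4,1,6,2,5,3,6,4,4,5,5,6,0] (by decide),
    Good.ofChk 7 6 21 [0,1,1,2,2,3,0,2,4,0,5,1,3,3,4,1,6,2,5,3,6,4,4,5,5,6,6,0] (by decide)
  ]

lemma base7_7 (b : ℕ) (h2 : 7 ≤ b) (h3 : b ≤ 20) : Good 7 7 b := by
  interval_cases b
  exacts [
    Good.ofChk 7 7 7 [0,1,1,2,0,3,4,0,5,1,3,2,2,6,0] (by decide),
    Good.ofChk 7 7 8 [0,1,1,2,0,3,4,0,5,1,3,2,2,4,6,0] (by decide),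
    Good.ofChk 7 7 9 [0,1,1,2,0,3,4,0,5,1,3,2,2,4,1,6,0] (by decide),
    Good.ofChk 7 7 10 [0,1,1,2,0,3,4,0,5,1,3,2,2,4,1,6,6,0] (by decide),
    Good.ofChk 7 7 11 [0,1,1,2,0,3,4,0,5,1,3,2,2,4,4,1,6,6,0] (by decide),
    Good.ofChk 7 7 12 [0,1,1,2,0,3,4,0,5,1,3,2,2,4,1,6,2,5,6,0] (by decide),
    Good.ofChk 7 7 13 [0,1,1,2,0,3,4,0,5,1,3,2,2,4,1,6,2,5,3,6,0] (by decide),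
    Good.ofChk 7 7 14 [0,1,1,2,0,3,4,0,5,1,3,2,2,4,1,6,2,5,3,3,6,0] (by decide),
    Good.ofChk 7 7 15 [0,1,1,2,0,3,4,0,5,1,3,2,2,4,1,6,2,5,3,3,6,6,0] (by decide),
    Good.ofChk 7 7 16 [0,1,1,2,0,3,4,0,5,1,3,2,2,4,1,6,2,5,3,6,4,5,6,0] (by decide),
    Good.ofChk 7 7 17 [0,1,1,2,0,3,4,0,5,1,3,2,2,4,1,6,2,5,3,3,6,4,5,6,0] (by decide),
    Good.ofChk 7 7 18 [0,1,1,2,0,3,4,0,5,1,3,2,2,4,1,6,2,5,3,3,6,4,4,5,6,0] (by decide),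
    Good.ofChk 7 7 19 [0,1,1,2,0,3,4,0,5,1,3,2,2,4,1,6,2,5,3,3,6,4,4,5,5,6,0] (by decide),
    Good.ofChk 7 7 20 [0,1,1,2,0,3,4,0,5,1,3,2,2,4,1,6,2,5,3,3,6,4,4,5,5,6,6,0] (by decide)
  ]

lemma base7_8 (b : ℕ) (h2 : 8 ≤ b) (h3 : b ≤ 19) : Good 7 8 b := by
  interval_cases b
  exacts [
    Good.ofChk 7 8 8 [0,1,1,2,0,3,1,4,0,5,1,6,2,2,3,6,0] (by decide),
    Good.ofChk 7 8 9 [0,1,1,2,0,3,1,4,0,5,1,6,2,2,3,3,6,0] (by decide),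
    Good.ofChk 7 8 10 [0,1,1,2,0,3,1,4,0,5,1,6,2,2,3,3,4,6,0] (by decide),
    Good.ofChk 7 8 11 [0,1,1,2,0,3,1,4,0,5,1,6,2,2,3,3,4,4,6,0] (by decide),
    Good.ofChk 7 8 12 [0,1,1,2,0,3,1,4,0,5,1,6,2,2,3,3,4,2,5,6,0] (by decide),
    Good.ofChk 7 8 13 [0,1,1,2,0,3,1,4,0,5,1,6,2,2,3,3,4,2,5,3,6,0] (by decide),
    Good.ofChk 7 8 14 [0,1,1,2,0,3,1,4,0,5,1,6,2,2,3,3,4,2,5,3,6,6,0] (by decide),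
    Good.ofChk 7 8 15 [0,1,1,2,0,3,1,4,0,5,1,6,2,2,3,3,4,2,5,4,4,6,6,0] (by decide),
    Good.ofChk 7 8 16 [0,1,1,2,0,3,1,4,0,5,1,6,2,2,3,3,4,2,5,3,6,4,5,6,0] (by decide),
    Good.ofChk 7 8 17 [0,1,1,2,0,3,1,4,0,5,1,6,2,2,3,3,4,2,5,3,6,4,4,5,6,0] (by decide),
    Good.ofChk 7 8 18 [0,1,1,2,0,3,1,4,0,5,1,6,2,2,3,3,4,2,5,3,6,4,4,5,5,6,0] (by decide),
    Good.ofChk 7 8 19 [0,1,1,2,0,3,1,4,0,5,1,6,2,2,3,3,4,2,5,3,6,4,4,5,5,6,6,0] (by decide)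
  ]

lemma base7_9 (b : ℕ) (h2 : 9 ≤ b) (h3 : b ≤ 18) : Good 7 9 b := by
  interval_cases b
  exacts [
    Good.ofChk 7 9 9 [0,1,1,2,0,3,1,4,4,0,5,1,6,2,2,3,3,6,0] (by decide),
    Good.ofChk 7 9 10 [0,1,1,2,0,3,1,4,4,0,5,1,6,2,2,3,3,4,6,0] (by decide),
    Good.ofChk 7 9 11 [0,1,1,2,0,3,1,4,4,0,5,1,6,2,2,3,3,4,5,6,0] (by decide),
    Good.ofChk 7 9 12 [0,1,1,2,0,3,1,4,4,0,5,1,6,2,2,3,3,4,2,5,6,0] (by decide),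
    Good.ofChk 7 9 13 [0,1,1,2,0,3,1,4,4,0,5,1,6,2,2,3,3,4,2,5,3,6,0] (by decide),
    Good.ofChk 7 9 14 [0,1,1,2,0,3,1,4,4,0,5,1,6,2,2,3,3,4,2,5,3,6,6,0] (by decide),
    Good.ofChk 7 9 15 [0,1,1,2,0,3,1,4,4,0,5,1,6,2,2,3,3,4,2,5,5,3,6,6,0] (by decide),
    Good.ofChk 7 9 16 [0,1,1,2,0,3,1,4,4,0,5,1,6,2,2,3,3,4,2,5,3,6,4,5,6,0] (by decide),
    Good.ofChk 7 9 17 [0,1,1,2,0,3,1,4,4,0,5,1,6,2,2,3,3,4,2,5,3,6,4,5,5,6,0] (by decide),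
    Good.ofChk 7 9 18 [0,1,1,2,0,3,1,4,4,0,5,1,6,2,2,3,3,4,2,5,3,6,4,5,5,6,6,0] (by decide)
  ]

lemma base7_10 (b : ℕ) (h2 : 10 ≤ b) (h3 : b ≤ 17) : Good 7 10 b := by
  interval_cases b
  exacts [
    Good.ofChk 7 10 10 [0,1,1,2,0,3,1,4,2,5,0,4,3,2,2,6,1,5,3,6,0] (by decide),
    Good.ofChk 7 10 11 [0,1,1,2,0,3,1,4,2,5,0,4,3,2,2,6,1,5,3,3,6,0] (by decide),
    Good.ofChk 7 10 12 [0,1,1,2,0,3,1,4,2,5,0,4,3,2,2,6,1,5,3,3,6,6,0] (by decide),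
    Good.ofChk 7 10 13 [0,1,1,2,0,3,1,4,2,5,0,4,3,2,2,6,1,5,3,6,4,5,6,0] (by decide),
    Good.ofChk 7 10 14 [0,1,1,2,0,3,1,4,2,5,0,4,3,2,2,6,1,5,3,3,6,4,5,6,0] (by decide),
    Good.ofChk 7 10 15 [0,1,1,2,0,3,1,4,2,5,0,4,3,2,2,6,1,5,3,3,6,4,4,5,6,0] (by decide),
    Good.ofChk 7 10 16 [0,1,1,2,0,3,1,4,2,5,0,4,3,2,2,6,1,5,3,3,6,4,4,5,5,6,0] (by decide),
    Good.ofChk 7 10 17 [0,1,1,2,0,3,1,4,2,5,0,4,3,2,2,6,1,5,3,3,6,4,4,5,5,6,6,0] (by decide)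
  ]

lemma base7_11 (b : ℕ) (h2 : 11 ≤ b) (h3 : b ≤ 16) : Good 7 11 b := by
  interval_cases b
  exacts [
    Good.ofChk 7 11 11 [0,1,1,2,0,3,1,4,2,2,5,0,4,3,2,6,1,5,3,3,6,6,0] (by decide),
    Good.ofChk 7 11 12 [0,1,1,2,0,3,1,4,2,2,5,0,4,3,2,6,1,5,3,6,4,5,6,0] (by decide),
    Good.ofChk 7 11 13 [0,1,1,2,0,3,1,4,2,2,5,0,4,3,2,6,1,5,3,3,6,4,5,6,0] (by decide),
    Good.ofChk 7 11 14 [0,1,1,2,0,3,1,4,2,2,5,0,4,3,2,6,1,5,3,3,6,4,4,5,6,0] (by decide),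
    Good.ofChk 7 11 15 [0,1,1,2,0,3,1,4,2,2,5,0,4,3,2,6,1,5,3,3,6,4,4,5,5,6,0] (by decide),
    Good.ofChk 7 11 16 [0,1,1,2,0,3,1,4,2,2,5,0,4,3,2,6,1,5,3,3,6,4,4,5,5,6,6,0] (by decide)
  ]

lemma base7_12 (b : ℕ) (h2 : 12 ≤ b) (h3 : b ≤ 15) : Good 7 12 b := by
  interval_cases b
  exacts [
    Good.ofChk 7 12 12 [0,1,1,2,0,3,1,4,2,2,3,4,0,5,1,6,2,5,3,3,6,4,5,6,0] (by decide),
    Good.ofChk 7 12 13 [0,1,1,2,0,3,1,4,2,2,3,4,0,5,1,6,2,5,3,3,6,4,4,5,6,0] (by decide),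
    Good.ofChk 7 12 14 [0,1,1,2,0,3,1,4,2,2,3,4,0,5,1,6,2,5,3,3,6,4,4,5,5,6,0] (by decide),
    Good.ofChk 7 12 15 [0,1,1,2,0,3,1,4,2,2,3,4,0,5,1,6,2,5,3,3,6,4,4,5,5,6,6,0] (by decide)
  ]

lemma base7_13 (b : ℕ) (h2 : 13 ≤ b) (h3 : b ≤ 14) : Good 7 13 b := by
  interval_cases b
  exacts [
    Good.ofChk 7 13 13 [0,1,1,2,0,3,1,4,2,2,3,3,4,0,5,1,6,2,5,3,6,4,4,5,5,6,0] (by decide),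
    Good.ofChk 7 13 14 [0,1,1,2,0,3,1,4,2,2,3,3,4,0,5,1,6,2,5,3,6,4,4,5,5,6,6,0] (by decide)
  ]

lemma base7 (a b : ℕ) (h1 : 3 ≤ a) (h2 : a ≤ b) (h3 : a + b ≤ 27) : Good 7 a b := by
  have ha2 : a ≤ 13 := by omega
  interval_cases a
  exacts [base7_3 b h2 (by omega), base7_4 b h2 (by omega), base7_5 b h2 (by omega), base7_6 b h2 (by omega), base7_7 b h2 (by omega), base7_8 b h2 (by omega), base7_9 b h2 (by omega), base7_10 b h2 (by omega), base7_11 b h2 (by omega), base7_12 b h2 (by omega), base7_13 b h2 (by omega)]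

section Detour

def dv (k s xy lx ly i : ℕ) : ℕ :=
  if i = 0 then 0
  else if 2 + lx + xy + 2*s + ly ≤ i then 0
  else if i ≤ 1 + lx then k
  else if i < 2 + lx + xy then k + 1
  else if i < 2 + lx + xy + 2*s then
    (if (i - (2+lx+xy)) % 2 = 0 then (i - (2+lx+xy))/2 + 1
     else (if ((i - (2+lx+xy))/2 + 1 + xy) % 2 = 1 then k+1 else k))
  else k+1

def invD (k s xy lx ly lo hi : ℕ) : ℕ :=
  if hi = k then
    if lo = 0 then 0
    else if lo = k then 1
    else if (lo + xy) % 2 = 0 then (2+lx+xy) + 2*(lo-1) else (2+lx+xy) + 2*lo - 3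
  else
    if lo = 0 then (2+lx+xy) + 2*s + ly - 1
    else if lo = k then 1 + lx
    else if lo = k+1 then (2+lx+xy) + 2*s - 1
    else if (lo + xy) % 2 = 1 then (2+lx+xy) + 2*(lo-1) else (2+lx+xy) + 2*lo - 3

variable {k s xy lx ly : ℕ}

lemma dv_lt (hs : s + 1 ≤ k) (hk : 5 ≤ k) (i : ℕ) : dv k s xy lx ly i < k + 2 := by
  unfold dv; split_ifs <;> omega

lemma dv_zero : dv k s xy lx ly 0 = 0 := by unfold dv; simp

lemma dv_top (i : ℕ) (h : 2 + lx + xy + 2*s + ly ≤ i) : dv k s xy lx ly i = 0 := by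
  unfold dv; split_ifs <;> omega

lemma dv_x (i : ℕ) (h1 : 1 ≤ i) (h2 : i ≤ 1 + lx) : dv k s xy lx ly i = k := by
  unfold dv; split_ifs <;> omega

lemma dv_y (h : xy = 1) : dv k s xy lx ly (2+lx) = k+1 := by
  unfold dv; split_ifs <;> omega

lemma dv_e (j : ℕ) (h1 : 1 ≤ j) (h2 : j ≤ s) :
    dv k s xy lx ly ((2+lx+xy) + 2*(j-1)) = j := by
  unfold dv; split_ifs <;> omega

lemma dv_z (j : ℕ) (h1 : 1 ≤ j) (h2 : j ≤ s) :
    dv k s xy lx ly ((2+lx+xy) + 2*j - 1) =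
      (if (j + xy) % 2 = 1 then k+1 else k) := by
  unfold dv; split_ifs <;> omega

lemma dv_ly (h : ly = 1) : dv k s xy lx ly ((2+lx+xy) + 2*s) = k+1 := by
  unfold dv; split_ifs <;> omega

lemma dv_char (hxy1 : xy ≤ 1) (hlx : lx ≤ 1) (hly : ly ≤ 1)
    (hp0 : xy = 0 → s % 2 = 1) (hp1 : xy = 1 → s % 2 = 0)
    (hs : s + 1 ≤ k) (hk : 5 ≤ k) :
    ∀ i, i < 2 + lx + xy + 2*s + ly →
      (k ≤ max (dv k s xy lx ly i) (dv k s xy lx ly (i+1)) ∧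
       invD k s xy lx ly (min (dv k s xy lx ly i) (dv k s xy lx ly (i+1)))
         (max (dv k s xy lx ly i) (dv k s xy lx ly (i+1))) = i) := by
  intro i hi
  set p := 2 + lx + xy with hp
  set T := 2 + lx + xy + 2*s + ly with hT
  by_cases c0 : i = 0
  · subst c0
    rw [dv_zero, dv_x 1 (by omega) (by omega)]
    rw [min_eq_left (by omega), max_eq_right (by omega)]
    refine ⟨le_refl _, ?_⟩
    unfold invD
    rw [if_pos rfl, if_pos rfl]
  · by_cases c1 : i = 1 ∧ lx = 1
    · obtain ⟨rfl, hlx1⟩ := c1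
      rw [dv_x 1 (by omega) (by omega), dv_x 2 (by omega) (by omega)]
      simp only [min_self, max_self]
      refine ⟨le_refl _, ?_⟩
      unfold invD
      rw [if_pos rfl, if_neg (by omega), if_pos rfl]
    · by_cases c2 : i = 1 + lx
      · subst c2
        rcases Nat.lt_or_ge xy 1 with hxy0 | hxy1'
        · -- xy = 0, edge (x, 1)
          have hxy0 : xy = 0 := by omega
          have hs1 : 1 ≤ s := by have := hp0 hxy0; omega
          have : (1:ℕ) + lx + 1 = p + 2*(1-1) := by omega
          rw [dv_x (1+lx) (by omega) (by omega), this, dv_e 1 (by omega) hs1]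
          rw [min_eq_right (by omega), max_eq_left (by omega)]
          refine ⟨le_refl _, ?_⟩
          unfold invD
          rw [if_pos rfl, if_neg (by omega), if_neg (by omega),
            if_neg (by omega : ¬ (1 + xy) % 2 = 0)]
          omega
        · -- xy = 1, edge (x, y)
          have hxy1'' : xy = 1 := by omega
          have : (1:ℕ) + lx + 1 = 2 + lx := by omega
          rw [dv_x (1+lx) (by omega) (by omega), this, dv_y hxy1'']
          rw [min_eq_left (by omega), max_eq_right (by omega)]
          refine ⟨by omega, ?_⟩
          unfold invD
          rw [if_neg (by omega), if_neg (by omega), if_pos rfl]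
      · by_cases c3 : xy = 1 ∧ i = 2 + lx ∧ 1 ≤ s
        · obtain ⟨hxy1'', rfl, hs1⟩ := c3
          have : (2:ℕ) + lx + 1 = p + 2*(1-1) := by omega
          rw [dv_y hxy1'', this, dv_e 1 (by omega) hs1]
          rw [min_eq_right (by omega), max_eq_left (by omega)]
          refine ⟨by omega, ?_⟩
          unfold invD
          rw [if_neg (by omega), if_neg (by omega), if_neg (by omega), if_neg (by omega),
            if_neg (by omega : ¬ (1 + xy) % 2 = 1)]
          omega
        · by_cases c4 : i + 1 = p + 2*s
          · -- edge (y, dv q), i = q - 1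
            have hdvi : dv k s xy lx ly i = k + 1 := by
              rcases Nat.eq_zero_or_pos s with hs0 | hs1
              · -- s = 0 : xy = 1, i = p - 1 = 2 + lx
                have hxy1'' : xy = 1 := by
                  rcases Nat.lt_or_ge xy 1 with h' | h'
                  · exact absurd (hp0 (by omega)) (by omega)
                  · omega
                have : i = 2 + lx := by omega
                rw [this, dv_y hxy1'']
              · have hpar : (s + xy) % 2 = 1 := by
                  rcases Nat.lt_or_ge xy 1 with h' | h'
                  · have := hp0 (by omega); omega
                  · have := hp1 (by omega); omega
                have hieq : i = p + 2*s - 1 := by omega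
                rw [hieq, dv_z s (by omega) (by omega), if_pos hpar]
            rcases Nat.eq_zero_or_pos ly with hly0 | hly1
            · have : i + 1 = T := by omega
              rw [hdvi, this, dv_top T (by omega)]
              rw [min_eq_right (by omega), max_eq_left (by omega)]
              refine ⟨by omega, ?_⟩
              unfold invD
              rw [if_neg (by omega), if_pos rfl]
              omega
            · have hq : i + 1 = p + 2*s := c4
              rw [hdvi, hq, dv_ly (by omega)]
              simp only [min_self, max_self]
              refine ⟨by omega, ?_⟩
              unfold invD
              rw [if_neg (by omega), if_neg (by omega), if_neg (by omega), if_pos rfl]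
              omega
          · by_cases c5 : i = p + 2*s ∧ ly = 1
            · obtain ⟨rfl, hly1⟩ := c5
              rw [dv_ly hly1, dv_top (p + 2*s + 1) (by omega)]
              rw [min_eq_right (by omega), max_eq_left (by omega)]
              refine ⟨by omega, ?_⟩
              unfold invD
              rw [if_neg (by omega), if_pos rfl]
              omega
            · -- weave interior : p ≤ i, i + 1 < p + 2*s
              have hw2 : i + 1 < p + 2*s := by
                by_contra h'
                push_neg at h'
                have hieq : i = p + 2*s := by omega
                exact c5 ⟨hieq, by omega⟩
              have hw1 : p ≤ i := by
                by_contra h'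
                push_neg at h'
                rcases (by omega : xy = 0 ∨ xy = 1) with h0 | h1
                · exact c1 ⟨by omega, by omega⟩
                · by_cases h2 : i = 2 + lx
                  · exact c3 ⟨h1, h2, by omega⟩
                  · exact c1 ⟨by omega, by omega⟩
              set m := i - p with hm
              rcases Nat.even_or_odd m with hme | hmo
              · -- edge (e_j, z_j), j = m/2+1
                obtain ⟨j', hj'⟩ := hme
                set j := j' + 1 with hj
                have hjs : j ≤ s := by omega
                have hie : i = p + 2*(j-1) := by omega
                have e1 : dv k s xy lx ly i = j := by
                  rw [hie]; exact dv_e j (by omega) hjs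
                have e2 : dv k s xy lx ly (i+1) =
                    (if (j + xy) % 2 = 1 then k+1 else k) := by
                  rw [show i + 1 = p + 2*j - 1 by omega]; exact dv_z j (by omega) hjs
                rw [e1, e2]
                by_cases hpar : (j + xy) % 2 = 1
                · rw [if_pos hpar]
                  rw [min_eq_left (by omega), max_eq_right (by omega)]
                  refine ⟨by omega, ?_⟩
                  unfold invD
                  rw [if_neg (by omega), if_neg (by omega), if_neg (by omega),
                    if_neg (by omega), if_pos hpar]
                  omega
                · rw [if_neg hpar]
                  rw [min_eq_left (by omega), max_eq_right (by omega)]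
                  refine ⟨le_refl _, ?_⟩
                  unfold invD
                  rw [if_pos rfl, if_neg (by omega), if_neg (by omega),
                    if_pos (by omega : (j + xy) % 2 = 0)]
                  omega
              · -- edge (z_J, e_(J+1)) with J = j+1
                obtain ⟨j, hj⟩ := hmo
                have hJs : j + 1 ≤ s := by omega
                have hJ1s : j + 2 ≤ s := by omega
                have e1 : dv k s xy lx ly i =
                    (if (j + 1 + xy) % 2 = 1 then k+1 else k) := by
                  rw [show i = p + 2*(j+1) - 1 by omega]
                  exact dv_z (j+1) (by omega) hJs
                have e2 : dv k s xy lx ly (i+1) = j + 2 := by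
                  rw [show i + 1 = p + 2*((j+2)-1) by omega]
                  exact dv_e (j+2) (by omega) hJ1s
                rw [e1, e2]
                by_cases hpar : (j + 1 + xy) % 2 = 1
                · rw [if_pos hpar]
                  rw [min_eq_right (by omega), max_eq_left (by omega)]
                  refine ⟨by omega, ?_⟩
                  unfold invD
                  rw [if_neg (by omega), if_neg (by omega), if_neg (by omega),
                    if_neg (by omega), if_neg (by omega : ¬ (j + 2 + xy) % 2 = 1)]
                  omega
                · rw [if_neg hpar]
                  rw [min_eq_right (by omega), max_eq_left (by omega)]
                  refine ⟨le_refl _, ?_⟩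
                  unfold invD
                  rw [if_pos rfl, if_neg (by omega), if_neg (by omega),
                    if_neg (by omega : ¬ (j + 2 + xy) % 2 = 0)]
                  omega

lemma sym2_minmax {a b c d : ℕ} (h : s(a,b) = s(c,d)) :
    min a b = min c d ∧ max a b = max c d := by
  rw [Sym2.eq_iff] at h
  rcases h with ⟨rfl, rfl⟩ | ⟨rfl, rfl⟩
  · exact ⟨rfl, rfl⟩
  · exact ⟨min_comm _ _, max_comm _ _⟩

lemma select (k t : ℕ) (hko : k % 2 = 1) (hk : 5 ≤ k) (h3 : 3 ≤ t) (hcap : t ≤ 2*k+3) :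
    ∃ s xy lx ly, xy ≤ 1 ∧ lx ≤ 1 ∧ ly ≤ 1 ∧ (xy = 0 → s % 2 = 1) ∧
      (xy = 1 → s % 2 = 0) ∧ s + 1 ≤ k ∧ t = 2 + lx + xy + 2*s + ly := by
  by_cases h1 : 2*k+1 ≤ t
  · exact ⟨k-1, 1, min (t-(2*k+1)) 1, t-(2*k+1) - min (t-(2*k+1)) 1,
      by omega, by omega, by omega, by omega, by omega, by omega, by omega⟩
  · by_cases h2 : ((t-2)/2) % 2 = 1
    · exact ⟨(t-2)/2, 0, min (t-2-2*((t-2)/2)) 1, t-2-2*((t-2)/2) - min (t-2-2*((t-2)/2)) 1,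
        by omega, by omega, by omega, by omega, by omega, by omega, by omega⟩
    · by_cases h3' : t % 2 = 1
      · exact ⟨(t-2)/2, 1, 0, 0, by omega, by omega, by omega, by omega, by omega,
          by omega, by omega⟩
      · exact ⟨(t-2)/2 - 1, 0, 1, 1, by omega, by omega, by omega, by omega, by omega,
          by omega, by omega⟩

lemma Good.append {k a b : ℕ} (hG : Good k a b) (hk5 : 5 ≤ k) (hko : k % 2 = 1)
    {t : ℕ} (h3 : 3 ≤ t) (hcap : t ≤ 2*k+3) : Good (k+2) a (b+t) := by
  obtain ⟨s, xy, lx, ly, hxy1, hlx, hly, hp0, hp1, hs, hteq⟩ := select k t hko hk5 h3 hcap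
  obtain ⟨w, hb, h0, ha, hab, hnl, hinj⟩ := hG
  set n := a + b with hn
  set T := 2 + lx + xy + 2*s + ly with hT
  set d : ℕ → ℕ := dv k s xy lx ly with hd
  have hchar := dv_char hxy1 hlx hly hp0 hp1 hs hk5
  set w' : ℕ → ℕ := fun i => if i ≤ n then w i else d (i - n) with hw'
  have hvd : ∀ i, n ≤ i → i ≤ n + T → w' i = d (i - n) := by
    intro i h1 h2
    simp only [hw']
    split
    · rw [show i - n = 0 by omega, hd, dv_zero, show i = n by omega]
      exact hab
    · rfl
  have hedge : ∀ i, n ≤ i → i < n + T → s(w' i, w' (i+1)) = s(d (i-n), d (i-n+1)) := by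
    intro i h1 h2
    rw [hvd i h1 (by omega), hvd (i+1) (by omega) (by omega), show i + 1 - n = i - n + 1 by omega]
  refine ⟨w', ?_, ?_, ?_, ?_, ?_, ?_⟩
  · intro i
    simp only [hw']
    split
    · have := hb i; omega
    · exact dv_lt hs hk5 _
  · simp only [hw', if_pos (by omega : 0 ≤ n)]; exact h0
  · simp only [hw', if_pos (by omega : a ≤ n)]; exact ha
  · rw [show a + (b + t) = n + T by omega, hvd (n+T) (by omega) (by omega),
      show n + T - n = T by omega, hd]
    exact dv_top T (by omega)
  · intro i hi hz
    by_cases hc : i < n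
    · refine hnl i hc ⟨?_, ?_⟩
      · rw [← hz.1]; simp only [hw', if_pos (by omega : i ≤ n)]
      · rw [← hz.2]; simp only [hw', if_pos (by omega : i + 1 ≤ n)]
    · have h1 : n ≤ i := by omega
      have h2 : i < n + T := by omega
      have := (hchar (i - n) (by omega)).1
      rw [hvd i h1 (by omega), hvd (i+1) (by omega) (by omega)] at hz
      rw [show i + 1 - n = i - n + 1 by omega] at hz
      rw [hd] at hz
      rw [hz.1, hz.2] at this
      simp at this
      omega
  · intro i j hi hj heq
    have hiT : i < n + T := by omega
    have hjT : j < n + T := by omega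
    by_cases hci : i < n <;> by_cases hcj : j < n
    · -- both old
      have ei : s(w' i, w' (i+1)) = s(w i, w (i+1)) := by
        simp only [hw', if_pos (by omega : i ≤ n), if_pos (by omega : i + 1 ≤ n)]
      have ej : s(w' j, w' (j+1)) = s(w j, w (j+1)) := by
        simp only [hw', if_pos (by omega : j ≤ n), if_pos (by omega : j + 1 ≤ n)]
      rw [ei, ej] at heq
      exact hinj i j hci hcj heq
    · -- i old, j new : contradiction
      exfalso
      have ei : s(w' i, w' (i+1)) = s(w i, w (i+1)) := by
        simp only [hw', if_pos (by omega : i ≤ n), if_pos (by omega : i + 1 ≤ n)]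
      rw [ei, hedge j (by omega) hjT] at heq
      have hmm := (sym2_minmax heq).2
      have := (hchar (j - n) (by omega)).1
      have b1 := hb i; have b2 := hb (i+1)
      rw [← hmm] at this
      rcases max_cases (w i) (w (i+1)) with ⟨hc, _⟩ | ⟨hc, _⟩ <;> rw [hc] at this <;> omega
    · -- j old, i new
      exfalso
      have ej : s(w' j, w' (j+1)) = s(w j, w (j+1)) := by
        simp only [hw', if_pos (by omega : j ≤ n), if_pos (by omega : j + 1 ≤ n)]
      rw [ej, hedge i (by omega) hiT] at heq
      have hmm := (sym2_minmax heq).2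
      have := (hchar (i - n) (by omega)).1
      have b1 := hb j; have b2 := hb (j+1)
      rw [hmm] at this
      rcases max_cases (w j) (w (j+1)) with ⟨hc, _⟩ | ⟨hc, _⟩ <;> rw [hc] at this <;> omega
    · -- both new
      rw [hedge i (by omega) hiT, hedge j (by omega) hjT] at heq
      obtain ⟨hmin, hmax⟩ := sym2_minmax heq
      have ci := (hchar (i - n) (by omega)).2
      have cj := (hchar (j - n) (by omega)).2
      rw [hd] at hmin hmax
      rw [hmin, hmax] at ci
      have hij : i - n = j - n := ci.symm.trans cj
      omega

end Detour

lemma stepUp (m' : ℕ) (hm : 3 ≤ m')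
    (IH : ∀ a b, 3 ≤ a → 3 ≤ b → a + b ≤ (2*m'+1)*(m'+1) - 1 → Good (2*m'+1) a b)
    (a b : ℕ) (h1 : 3 ≤ a) (h2 : 3 ≤ b)
    (h3 : a + b ≤ (2*(m'+1)+1)*((m'+1)+1) - 1) : Good (2*(m'+1)+1) a b := by
  have hk5 : 5 ≤ 2*m'+1 := by omega
  have hko : (2*m'+1) % 2 = 1 := by omega
  have key : (2*(m'+1)+1)*((m'+1)+1) = (2*m'+1)*(m'+1) + (4*m'+5) := by ring
  have hP : 7*(m'+1) ≤ (2*m'+1)*(m'+1) := Nat.mul_le_mul (by omega) (le_refl _)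
  set P := (2*m'+1)*(m'+1) with hPdef
  rw [key] at h3
  by_cases hc : a + b ≤ P - 1
  · exact (IH a b h1 h2 hc).mono (by omega)
  · set R := a + b - (P - 1) with hR
    set T := max R 3 with hTd
    have hT3 : 3 ≤ T := le_max_right _ _
    have hTcap : T ≤ 2*(2*m'+1)+3 := by omega
    by_cases hcb : T + 3 ≤ b
    · have hGood := IH a (b - T) h1 (by omega) (by omega)
      have hap := hGood.append hk5 hko (t := T) hT3 hTcap
      rw [show b - T + T = b by omega] at hap
      exact hap.mono (by omega)
    · by_cases hca : T + 3 ≤ a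
      · have hGood := IH b (a - T) h2 (by omega) (by omega)
        have hap := hGood.append hk5 hko (t := T) hT3 hTcap
        rw [show a - T + T = a by omega] at hap
        exact (hap.swap).mono (by omega)
      · exfalso
        omega

lemma goodAll : ∀ m, 2 ≤ m → ∀ a b, 3 ≤ a → 3 ≤ b →
    a + b ≤ (2*m+1)*(m+1) - 1 → Good (2*m+1) a b := by
  intro m
  induction m with
  | zero => intro h; exact absurd h (by omega)
  | succ n ih =>
    intro hm a b h1 h2 h3
    by_cases hn2 : n = 1
    · subst hn2
      norm_num at h3 ⊢
      rcases Nat.le_total a b with hab | hab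
      · exact base5 a b h1 hab (by omega)
      · exact (base5 b a h2 hab (by omega)).swap
    · by_cases hn3 : n = 2
      · subst hn3
        norm_num at h3 ⊢
        rcases Nat.le_total a b with hab | hab
        · exact base7 a b h1 hab (by omega)
        · exact (base7 b a h2 hab (by omega)).swap
      · exact stepUp n (by omega) (ih (by omega)) a b h1 h2 h3

lemma good_to_embed {k c2 c3 : ℕ} (h2 : 3 ≤ c2) (h3 : 3 ≤ c3) (hG : Good k c2 c3) :
    FamEmbedsInKStar (petalEdge c2 c3) k := by
  obtain ⟨w, hb, h0, ha, hab, hnl, hinj⟩ := hG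
  set F : ℕ → Fin k := fun j => ⟨w j, hb j⟩ with hF
  set f : ℕ → Fin k := fun n => if n < c2 then F n else F (n+1) with hf
  have hF0 : F 0 = ⟨0, by have := hb 0; omega⟩ := by simp only [hF, Fin.mk.injEq]; exact h0
  have hf0 : f 0 = F 0 := by simp only [hf]; rw [if_pos (by omega)]
  have fc2 : ∀ j, j ≤ c2 → f (cycV 0 c2 j) = F j := by
    intro j hj
    unfold cycV
    by_cases hm : j % c2 = 0
    · rw [if_pos hm, hf0]
      have hj0c : j = 0 ∨ j = c2 := by
        rcases Nat.eq_zero_or_pos j with rfl | hpos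
        · exact Or.inl rfl
        · right
          have hdvd := Nat.dvd_of_mod_eq_zero hm
          have := Nat.le_of_dvd hpos hdvd
          omega
      have : w j = 0 := by
        rcases hj0c with rfl | rfl
        · exact h0
        · exact ha
      simp only [hF, Fin.mk.injEq]
      rw [h0, this]
    · rw [if_neg hm]
      have hjlt : j < c2 := by
        rcases Nat.lt_or_ge j c2 with h | h
        · exact h
        · exact absurd (by omega : j = c2) (fun he => hm (he ▸ Nat.mod_self c2))
      simp only [hf]
      rw [if_pos (by omega : 0 + j < c2)]
      norm_num
  have fc3 : ∀ j, j ≤ c3 → f (cycV (c2-1) c3 j) = F (c2 + j) := by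
    intro j hj
    unfold cycV
    by_cases hm : j % c3 = 0
    · rw [if_pos hm, hf0]
      have hj0c : j = 0 ∨ j = c3 := by
        rcases Nat.eq_zero_or_pos j with rfl | hpos
        · exact Or.inl rfl
        · right
          have hdvd := Nat.dvd_of_mod_eq_zero hm
          have := Nat.le_of_dvd hpos hdvd
          omega
      have : w (c2 + j) = 0 := by
        rcases hj0c with rfl | rfl
        · exact ha
        · exact hab
      simp only [hF, Fin.mk.injEq]
      rw [h0, this]
    · rw [if_neg hm]
      have hj0 : 1 ≤ j := by
        rcases Nat.eq_zero_or_pos j with rfl | h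
        · exact absurd (Nat.zero_mod c3) hm
        · exact h
      simp only [hf]
      rw [if_neg (by omega : ¬ c2 - 1 + j < c2)]
      rw [show c2 - 1 + j + 1 = c2 + j by omega]
  -- edge images
  set E : ℕ → Sym2 (Fin k) := fun j => s(F j, F (j+1)) with hE
  have himg2 : ∀ i : Fin c2, Sym2.map f (petalEdge c2 c3 (Sum.inr (Sum.inl i))) = E i.val := by
    intro i
    show Sym2.map f s(cycV 0 c2 i.val, cycV 0 c2 (i.val+1)) = _
    rw [Sym2.map_pair_eq, fc2 i.val (by omega), fc2 (i.val+1) (by omega)]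
  have himg3 : ∀ i : Fin c3, Sym2.map f (petalEdge c2 c3 (Sum.inr (Sum.inr i))) = E (c2 + i.val) := by
    intro i
    show Sym2.map f s(cycV (c2-1) c3 i.val, cycV (c2-1) c3 (i.val+1)) = _
    rw [Sym2.map_pair_eq, fc3 i.val (by omega), fc3 (i.val+1) (by omega)]
    rw [show c2 + (i.val + 1) = c2 + i.val + 1 by ring]
  have himg1 : Sym2.map f (petalEdge c2 c3 (Sum.inl ())) = s(F 0, F 0) := by
    show Sym2.map f s(0, 0) = _
    rw [Sym2.map_pair_eq, hf0]
  -- key distinctness facts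
  have hEA : ∀ j, j < c2 + c3 → E j ≠ s(F 0, F 0) := by
    intro j hj he
    rw [hE] at he
    rw [Sym2.eq_iff] at he
    have : w j = 0 ∧ w (j+1) = 0 := by
      rcases he with ⟨e1, e2⟩ | ⟨e1, e2⟩ <;>
        exact ⟨by rw [← h0]; exact congrArg Fin.val (by assumption : F j = F 0),
               by rw [← h0]; exact congrArg Fin.val (by assumption : F (j+1) = F 0)⟩
    exact hnl j hj this
  have hEinj : ∀ i j, i < c2 + c3 → j < c2 + c3 → E i = E j → i = j := by
    intro i j hi hj he
    apply hinj i j hi hj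
    rw [hE] at he
    rw [Sym2.eq_iff] at he ⊢
    rcases he with ⟨e1, e2⟩ | ⟨e1, e2⟩
    · exact Or.inl ⟨congrArg Fin.val e1, congrArg Fin.val e2⟩
    · exact Or.inr ⟨congrArg Fin.val e1, congrArg Fin.val e2⟩
  refine ⟨f, ?_⟩
  intro e1 e2 heq
  simp only at heq
  match e1, e2 with
  | Sum.inl (), Sum.inl () => rfl
  | Sum.inl (), Sum.inr (Sum.inl i) =>
    rw [himg1, himg2 i] at heq
    exact absurd heq.symm (hEA i.val (by omega))
  | Sum.inl (), Sum.inr (Sum.inr i) =>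
    rw [himg1, himg3 i] at heq
    exact absurd heq.symm (hEA (c2 + i.val) (by omega))
  | Sum.inr (Sum.inl i), Sum.inl () =>
    rw [himg1, himg2 i] at heq
    exact absurd heq (hEA i.val (by omega))
  | Sum.inr (Sum.inr i), Sum.inl () =>
    rw [himg1, himg3 i] at heq
    exact absurd heq (hEA (c2 + i.val) (by omega))
  | Sum.inr (Sum.inl i), Sum.inr (Sum.inl j) =>
    rw [himg2 i, himg2 j] at heq
    have := hEinj i.val j.val (by omega) (by omega) heq
    congr 2
    exact Fin.ext this
  | Sum.inr (Sum.inl i), Sum.inr (Sum.inr j) =>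
    rw [himg2 i, himg3 j] at heq
    have := hEinj i.val (c2 + j.val) (by omega) (by omega) heq
    omega
  | Sum.inr (Sum.inr i), Sum.inr (Sum.inl j) =>
    rw [himg3 i, himg2 j] at heq
    have := hEinj (c2 + i.val) j.val (by omega) (by omega) heq
    omega
  | Sum.inr (Sum.inr i), Sum.inr (Sum.inr j) =>
    rw [himg3 i, himg3 j] at heq
    have := hEinj (c2 + i.val) (c2 + j.val) (by omega) (by omega) heq
    congr 2
    exact Fin.ext (by omega)

lemma forward_dir {k c2 c3 : ℕ} (hc2 : 0 < c2) (hc : c2 ≤ c3)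
    (h : FamEmbedsInKStar (petalEdge c2 c3) k) :
    3 ≤ c2 ∧ 1 + c2 + c3 ≤ (k + 1).choose 2 := by
  obtain ⟨f, hinj⟩ := h
  constructor
  · by_contra hlt
    push_neg at hlt
    rcases (by omega : c2 = 1 ∨ c2 = 2) with rfl | rfl
    · have he : petalEdge 1 c3 (Sum.inl ()) = petalEdge 1 c3 (Sum.inr (Sum.inl ⟨0, one_pos⟩)) := by
        simp [petalEdge, cycV]
      have := hinj (congrArg _ he)
      simp at this
    · have he1 : petalEdge 2 c3 (Sum.inr (Sum.inl ⟨0, by omega⟩)) = s(0, 1) := by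
        simp [petalEdge, cycV]
      have he2 : petalEdge 2 c3 (Sum.inr (Sum.inl ⟨1, by omega⟩)) = s(1, 0) := by
        simp [petalEdge, cycV]
      have : Sym2.map f (petalEdge 2 c3 (Sum.inr (Sum.inl ⟨0, by omega⟩))) =
          Sym2.map f (petalEdge 2 c3 (Sum.inr (Sum.inl ⟨1, by omega⟩))) := by
        rw [he1, he2, Sym2.eq_swap]
      have := hinj this
      simp at this
  · have hcard := Fintype.card_le_of_injective _ hinj
    rw [Sym2.card] at hcard
    simp only [Fintype.card_sum, Fintype.card_unit, Fintype.card_fin] at hcard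
    omega


theorem petal_embeds_iff_odd (k c₂ c₃ : ℕ) (hk : Odd k)
    (hc₂ : 0 < c₂) (hc : c₂ ≤ c₃) :
    FamEmbedsInKStar (petalEdge c₂ c₃) k ↔
      3 ≤ c₂ ∧ 1 + c₂ + c₃ ≤ (k + 1).choose 2 := by
  constructor
  · exact forward_dir hc₂ hc
  · rintro ⟨h3, hb⟩
    have hko : k % 2 = 1 := Nat.odd_iff.mp hk
    have hchoose : ∀ n : ℕ, (2*n+1+1).choose 2 = (2*n+1)*(n+1) := by
      intro n
      rw [Nat.choose_two_right, Nat.add_sub_cancel]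
      rw [show (2*n+1+1) * (2*n+1) = 2*((2*n+1)*(n+1)) by ring]
      rw [Nat.mul_div_cancel_left _ (by norm_num : 0 < 2)]
    have hk5 : 5 ≤ k := by
      by_contra hlt
      push_neg at hlt
      interval_cases k <;> revert hb <;> simp [Nat.choose] <;> omega
    obtain ⟨m, rfl⟩ : ∃ m, k = 2*m+1 := ⟨k/2, by omega⟩
    rw [hchoose m] at hb
    have hG : Good (2*m+1) c₂ c₃ :=
      goodAll m (by omega) c₂ c₃ h3 (by omega) (by omega)
    exact good_to_embed h3 (by omega) hG
end

section
/- Let k be even and G a connected graph with exactly two vertices of odd degree. If G embeds in K_k^*, then |E(G)| ≤ C(k+1,2) − (k−2)/2 = (k² + 2)/2. -/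
/-- Degree of a vertex `v` of a graph given by a family of edges: a loop at
`v` contributes `2`, any other edge containing `v` contributes `1`. -/
def famDegree {V ι : Type*} [Fintype ι] [DecidableEq V]
    (ed : ι → Sym2 V) (v : V) : ℕ :=
  ∑ e : ι, (if ed e = s(v, v) then 2 else if v ∈ ed e then 1 else 0)

lemma aux_contrib_pair {α : Type*} [DecidableEq α] (a b v : α) :
    (if s(a, b) = s(v, v) then 2 else if v ∈ s(a, b) then 1 else 0)
      = (if a = v then 1 else 0) + (if b = v then 1 else 0) := by
  by_cases hav : a = v <;> by_cases hbv : b = v <;>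
      simp [Sym2.eq_iff, Sym2.mem_iff, hav, hbv] <;>
    exact ⟨fun h => hav h.symm, fun h => hbv h.symm⟩

lemma aux_fiber {V : Type*} [DecidableEq V] [Fintype V] {k : ℕ} (f : V → Fin k)
    (x : Sym2 V) (w : Fin k) :
    ∑ v ∈ Finset.univ.filter (fun v => f v = w),
        (if x = s(v, v) then 2 else if v ∈ x then 1 else 0)
      = (if Sym2.map f x = s(w, w) then 2 else if w ∈ Sym2.map f x then 1 else 0) := by
  induction x using Sym2.inductionOn with
  | hf a b =>
    rw [Sym2.map_pair_eq, aux_contrib_pair]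
    have hpt : ∀ v, (if s(a, b) = s(v, v) then 2 else if v ∈ s(a, b) then 1 else 0)
        = (if a = v then 1 else 0) + (if b = v then 1 else 0) :=
      fun v => aux_contrib_pair a b v
    simp_rw [hpt, Finset.sum_add_distrib, Finset.sum_ite_eq, Finset.mem_filter,
      Finset.mem_univ, true_and]

lemma aux_degree_image {V ι : Type*} [Fintype ι] [Fintype V] [DecidableEq V]
    {k : ℕ} (f : V → Fin k) (ed : ι → Sym2 V) (w : Fin k) :
    famDegree (fun e => Sym2.map f (ed e)) w
      = ∑ v ∈ Finset.univ.filter (fun v => f v = w), famDegree ed v := by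
  unfold famDegree
  rw [Finset.sum_comm]
  exact Finset.sum_congr rfl fun e _ => (aux_fiber f (ed e) w).symm

theorem two_odd_degrees_edge_bound {V ι : Type*} [Fintype ι] [Fintype V]
    [DecidableEq V] (k : ℕ) (hk : Even k)
    (ed : ι → Sym2 V) (hed : Function.Injective ed)
    (hconn : ∀ a b : V,
      Relation.ReflTransGen (fun x y => ∃ e, ed e = s(x, y)) a b)
    (hodd : (Finset.univ.filter fun v => ¬ Even (famDegree ed v)).card = 2)
    (h : FamEmbedsInKStar ed k) :
    Fintype.card ι ≤ (k ^ 2 + 2) / 2 := by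
  classical
  obtain ⟨f, hf⟩ := h
  set ed' : ι → Sym2 (Fin k) := fun e => Sym2.map f (ed e) with hed'def
  set c : Sym2 (Fin k) → Fin k → ℕ :=
    fun x w => if x = s(w, w) then 2 else if w ∈ x then 1 else 0 with hcdef
  -- odd-degree vertices in the image
  set OddW : Finset (Fin k) :=
    Finset.univ.filter (fun w => ¬ Even (famDegree ed' w)) with hOddWdef
  have hOddW_card : OddW.card ≤ 2 := by
    have hsub : OddW ⊆ (Finset.univ.filter fun v => ¬ Even (famDegree ed v)).image f := by
      intro w hw
      rw [hOddWdef, Finset.mem_filter] at hw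
      rw [aux_degree_image f ed w] at hw
      by_contra hc
      refine hw.2 (Finset.even_sum _ fun v hv => ?_)
      by_contra hodd'
      exact hc (Finset.mem_image.mpr ⟨v, Finset.mem_filter.mpr ⟨Finset.mem_univ v, hodd'⟩,
        (Finset.mem_filter.mp hv).2⟩)
    calc OddW.card ≤ _ := Finset.card_le_card hsub
      _ ≤ _ := Finset.card_image_le
      _ = 2 := hodd
  -- the image edge set and the missing edges
  set S : Finset (Sym2 (Fin k)) := Finset.image ed' Finset.univ with hSdef
  set M : Finset (Sym2 (Fin k)) := Finset.univ \ S with hMdef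
  have hScard : S.card = Fintype.card ι := Finset.card_image_of_injective _ hf
  have hSdeg : ∀ w, (∑ x ∈ S, c x w) = famDegree ed' w := by
    intro w
    rw [hSdef, Finset.sum_image (fun e _ e' _ hee' => hf hee')]
    rfl
  -- total degree of a vertex in K_k^*
  have htotal : ∀ w : Fin k, (∑ x : Sym2 (Fin k), c x w) = k + 1 := by
    intro w
    have hsplit : ∀ x : Sym2 (Fin k),
        c x w = (if x = s(w, w) then 1 else 0) + (if w ∈ x then 1 else 0) := by
      intro x
      by_cases h1 : x = s(w, w)
      · simp [hcdef, h1]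
      · by_cases h2 : w ∈ x <;> simp [hcdef, h1, h2]
    rw [Finset.sum_congr rfl fun x _ => hsplit x, Finset.sum_add_distrib]
    have h1 : (∑ x : Sym2 (Fin k), if x = s(w, w) then 1 else 0) = 1 := by
      rw [Finset.sum_ite_eq' Finset.univ (s(w, w)) (fun _ => 1)]
      simp
    have h2 : (∑ x : Sym2 (Fin k), if w ∈ x then 1 else 0) = k := by
      rw [← Finset.card_filter]
      have himg : Finset.univ.filter (fun x : Sym2 (Fin k) => w ∈ x)
          = Finset.image (fun u => s(w, u)) Finset.univ := by
        ext x
        simp [Sym2.mem_iff_exists, eq_comm]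
      rw [himg, Finset.card_image_of_injective _ (fun u u' huu' => Sym2.congr_right.mp huu')]
      simp
    rw [h1, h2]; omega
  have hMS : ∀ w, (∑ x ∈ M, c x w) + (∑ x ∈ S, c x w) = k + 1 := by
    intro w
    rw [← htotal w, hMdef]
    exact Finset.sum_sdiff (Finset.subset_univ S)
  -- every even-degree image vertex lies on a missing edge
  have hmiss : ∀ w ∈ Finset.univ \ OddW, ∃ x ∈ M, w ∈ x := by
    intro w hw
    rw [Finset.mem_sdiff, hOddWdef, Finset.mem_filter] at hw
    have heven : Even (famDegree ed' w) := by
      by_contra hc; exact hw.2 ⟨Finset.mem_univ w, hc⟩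
    have hMne : (∑ x ∈ M, c x w) ≠ 0 := by
      intro h0
      have := hMS w
      rw [h0, zero_add, hSdeg w] at this
      obtain ⟨m, hm⟩ := hk
      obtain ⟨n, hn⟩ := heven
      omega
    obtain ⟨x, hxM, hxc⟩ : ∃ x ∈ M, c x w ≠ 0 := by
      by_contra hc
      push_neg at hc
      exact hMne (Finset.sum_eq_zero hc)
    refine ⟨x, hxM, ?_⟩
    by_cases h1 : x = s(w, w)
    · rw [h1]; exact Sym2.mem_mk_left w w
    · by_cases h2 : w ∈ x
      · exact h2
      · exact absurd (by simp [hcdef, h1, h2]) hxc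
  -- counting: at least (k-2)/2 missing edges
  have hcover : (Finset.univ \ OddW) ⊆
      M.biUnion (fun x => Finset.univ.filter (fun w => w ∈ x)) := by
    intro w hw
    obtain ⟨x, hxM, hwx⟩ := hmiss w hw
    exact Finset.mem_biUnion.mpr ⟨x, hxM, Finset.mem_filter.mpr ⟨Finset.mem_univ w, hwx⟩⟩
  have hfilter_le : ∀ x : Sym2 (Fin k),
      (Finset.univ.filter (fun w => w ∈ x)).card ≤ 2 := by
    intro x
    induction x using Sym2.inductionOn with
    | hf a b =>
      have hsub : Finset.univ.filter (fun w => w ∈ s(a, b)) ⊆ {a, b} := by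
        intro w hw
        rw [Finset.mem_filter, Sym2.mem_iff] at hw
        simp only [Finset.mem_insert, Finset.mem_singleton]
        tauto
      calc (Finset.univ.filter (fun w => w ∈ s(a, b))).card
          ≤ ({a, b} : Finset (Fin k)).card := Finset.card_le_card hsub
        _ ≤ 2 := (Finset.card_insert_le a {b}).trans (by simp)
  have hEven_le : (Finset.univ \ OddW).card ≤ 2 * M.card := by
    calc (Finset.univ \ OddW).card
        ≤ (M.biUnion (fun x => Finset.univ.filter (fun w => w ∈ x))).card :=
          Finset.card_le_card hcover
      _ ≤ ∑ x ∈ M, (Finset.univ.filter (fun w => w ∈ x)).card := Finset.card_biUnion_le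
      _ ≤ ∑ _x ∈ M, 2 := Finset.sum_le_sum fun x _ => hfilter_le x
      _ = 2 * M.card := by rw [Finset.sum_const, smul_eq_mul, mul_comm]
  have hsd : (Finset.univ \ OddW).card = k - OddW.card := by
    rw [Finset.card_sdiff_of_subset (Finset.subset_univ OddW), Finset.card_univ, Fintype.card_fin]
  -- final counting
  have hMcard : S.card + M.card = Fintype.card (Sym2 (Fin k)) := by
    rw [hMdef, Finset.card_sdiff_of_subset (Finset.subset_univ S), Finset.card_univ]
    have := Finset.card_le_card (Finset.subset_univ S)
    rw [Finset.card_univ] at this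
    omega
  obtain ⟨m, hm⟩ := hk
  have htot : Fintype.card (Sym2 (Fin k)) = m * (2 * m + 1) := by
    rw [Sym2.card, Fintype.card_fin, Nat.choose_two_right, hm]
    have h1 : m + m + 1 - 1 = m + m := by omega
    have h2 : (m + m + 1) * (m + m) = m * (2 * m + 1) * 2 := by ring
    rw [h1, h2, Nat.mul_div_cancel _ (by norm_num)]
  have hgoal : (k ^ 2 + 2) / 2 = 2 * (m * m) + 1 := by
    have : k ^ 2 + 2 = (2 * (m * m) + 1) * 2 := by rw [hm]; ring
    rw [this, Nat.mul_div_cancel _ (by norm_num)]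
  rw [hgoal]
  have e3 : m * (2 * m + 1) = 2 * (m * m) + m := by ring
  rw [htot, e3] at hMcard
  rw [hsd] at hEven_le
  have key : Fintype.card ι + M.card = 2 * (m * m) + m := by rw [← hScard]; exact hMcard
  have hm2 : m ≤ M.card + 1 := by omega
  linarith [key, hm2]
end

section
/- Let k be odd and n ≥ 4. The chorded cycle C_n^{{0,2}} (an n-cycle with a chord between w_0 and w_2) can be embedded in K_k^* if and only if n ≤ C(k+1,2) − 3. -/
/-- Embedding of a graph (given by its edge set) in `K_k^*`: a vertex map
inducing an injection on edges. -/
def EmbedsInKStar {V : Type*} (E : Set (Sym2 V)) (k : ℕ) : Prop :=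
  ∃ f : V → Fin k, Set.InjOn (Sym2.map f) E

/-- The edge set of the chorded cycle `C_n^{{0,j}}`: the cycle
`w₀ w₁ ⋯ w_{n-1} w₀` on vertices `0, …, n-1` plus the chord `w₀ w_j`. -/
def chordedCycleEdges (n j : ℕ) : Set (Sym2 ℕ) :=
  ((fun i => s(i, (i + 1) % n)) '' Set.Iio n) ∪ {s(0, j)}

namespace CC

open Finset

variable {k : ℕ}

def dv (v : Fin k) (e : Sym2 (Fin k)) : ℕ :=
  Sym2.lift ⟨fun x y => (if x = v then 1 else 0) + (if y = v then 1 else 0),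
    fun x y => by ring⟩ e

@[simp] lemma dv_pair (v x y : Fin k) :
    dv v s(x, y) = (if x = v then 1 else 0) + (if y = v then 1 else 0) := rfl

lemma mem_of_dv_ne (v : Fin k) (e : Sym2 (Fin k)) (h : dv v e ≠ 0) : v ∈ e := by
  induction e using Sym2.ind with
  | _ x y =>
    rw [Sym2.mem_iff]
    simp only [dv_pair] at h
    by_contra hc
    push_neg at hc
    simp [Ne.symm hc.1, Ne.symm hc.2] at h

lemma dv_eq_sum (v : Fin k) (e : Sym2 (Fin k)) :
    dv v e = (∑ x : Fin k, if e = s(v, x) then 1 else 0)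
      + (if e = s(v, v) then 1 else 0) := by
  induction e using Sym2.ind with
  | _ p q =>
    simp only [dv_pair]
    by_cases hp : p = v <;> by_cases hq : q = v
    · rw [if_pos hp, if_pos hq, hp, hq]
      simp only [Sym2.congr_right]
      rw [Finset.sum_ite_eq Finset.univ v (fun _ => 1)]
      simp
    · rw [if_pos hp, if_neg hq, hp]
      simp only [Sym2.congr_right]
      rw [Finset.sum_ite_eq Finset.univ q (fun _ => 1), if_pos (Finset.mem_univ q), if_neg hq]
    · rw [if_neg hp, if_pos hq, hq]
      rw [show s(p, v) = s(v, p) from Sym2.eq_swap]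
      simp only [Sym2.congr_right]
      rw [Finset.sum_ite_eq Finset.univ p (fun _ => 1), if_pos (Finset.mem_univ p), if_neg hp]
    · have hno : ∀ z : Fin k, ¬ (s(p,q) = s(v,z)) := by
        intro z hz
        rcases Sym2.eq_iff.mp hz with ⟨h1, _⟩ | ⟨_, h2⟩
        · exact hp h1
        · exact hq h2
      rw [Finset.sum_congr rfl (fun z _ => if_neg (hno z)), if_neg (hno v),
        if_neg hp, if_neg hq, Finset.sum_const]
      simp

lemma dv_univ (v : Fin k) : ∑ e : Sym2 (Fin k), dv v e = k + 1 := by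
  rw [Finset.sum_congr rfl (fun e _ => dv_eq_sum v e), Finset.sum_add_distrib]
  rw [Finset.sum_comm]
  have h1 : ∀ x : Fin k, (∑ e : Sym2 (Fin k), if e = s(v,x) then 1 else 0) = 1 := by
    intro x
    rw [Finset.sum_ite_eq' Finset.univ (s(v,x)) (fun _ => 1), if_pos (mem_univ _)]
  have h2 : (∑ e : Sym2 (Fin k), if e = s(v,v) then 1 else 0) = 1 := by
    rw [Finset.sum_ite_eq' Finset.univ (s(v,v)) (fun _ => 1), if_pos (mem_univ _)]
  rw [Finset.sum_congr rfl (fun x _ => h1 x), h2, Finset.sum_const]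
  simp

lemma sum_shift {M : Type*} [AddCommMonoid M] (h : ℕ → M) (n : ℕ) (hn : 0 < n) :
    ∑ i ∈ range n, h ((i+1) % n) = ∑ i ∈ range n, h i := by
  refine Finset.sum_nbij' (fun i => (i+1) % n) (fun j => (j + (n-1)) % n) ?_ ?_ ?_ ?_ ?_
  · intro a _; exact mem_range.mpr (Nat.mod_lt _ hn)
  · intro a _; exact mem_range.mpr (Nat.mod_lt _ hn)
  · intro a ha
    rw [mem_range] at ha
    show ((a+1) % n + (n-1)) % n = a
    rw [Nat.mod_add_mod]
    have : a + 1 + (n - 1) = a + n := by omega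
    rw [this, Nat.add_mod_right, Nat.mod_eq_of_lt ha]
  · intro a ha
    rw [mem_range] at ha
    show ((a + (n-1)) % n + 1) % n = a
    rw [Nat.mod_add_mod]
    have : a + (n - 1) + 1 = a + n := by omega
    rw [this, Nat.add_mod_right, Nat.mod_eq_of_lt ha]
  · intro a _; rfl

lemma mod_succ_eq (i n : ℕ) (hi : i < n) : (i+1) % n = if i + 1 = n then 0 else i + 1 := by
  split
  · simp [*]
  · exact Nat.mod_eq_of_lt (by omega)

lemma embeds_bound {k n : ℕ} (hk : Odd k) (hn : 4 ≤ n)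
    (h : ∃ f : ℕ → Fin k, Set.InjOn (Sym2.map f)
      (((fun i => s(i, (i + 1) % n)) '' Set.Iio n) ∪ {s(0, 2)})) :
    n ≤ (k + 1).choose 2 - 3 := by
  classical
  obtain ⟨f, hf⟩ := h
  have hn0 : 0 < n := by omega
  set E : Set (Sym2 ℕ) := ((fun i => s(i, (i + 1) % n)) '' Set.Iio n) ∪ {s(0, 2)} with hE
  have memc : ∀ i < n, s((i:ℕ), (i+1) % n) ∈ E := fun i hi => Or.inl ⟨i, hi, rfl⟩
  have memch : s((0:ℕ), 2) ∈ E := Or.inr rfl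
  have hdom : ∀ i < n, ∀ j < n, s((i:ℕ), (i+1) % n) = s(j, (j+1) % n) → i = j := by
    intro i hi j hj heq
    rw [Sym2.eq_iff] at heq
    rcases heq with ⟨h1, _⟩ | ⟨h1, h2⟩
    · exact h1
    · rw [mod_succ_eq i n hi] at h2
      rw [mod_succ_eq j n hj] at h1
      split at h1 <;> split at h2 <;> omega
  have hchd : ∀ i < n, s((0:ℕ), 2) ≠ s(i, (i+1) % n) := by
    intro i hi heq
    rw [Sym2.eq_iff] at heq
    rw [mod_succ_eq i n hi] at heq
    rcases heq with ⟨h1, h2⟩ | ⟨h1, h2⟩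
    · split at h2 <;> omega
    · split at h1 <;> omega
  -- the image edges
  set g : ℕ → Sym2 (Fin k) := fun i => s(f i, f ((i+1) % n)) with hg
  have hmapc : ∀ i, Sym2.map f s((i:ℕ), (i+1) % n) = g i := fun i => Sym2.map_pair_eq f _ _
  have hmapch : Sym2.map f s((0:ℕ), 2) = s(f 0, f 2) := Sym2.map_pair_eq f _ _
  have ginj : ∀ i ∈ range n, ∀ j ∈ range n, g i = g j → i = j := by
    intro i hi j hj heq
    rw [mem_range] at hi hj
    rw [← hmapc, ← hmapc] at heq
    exact hdom i hi j hj (hf (memc i hi) (memc j hj) heq)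
  set T : Finset (Sym2 (Fin k)) := (range n).image g with hT
  have cardT : T.card = n := by
    rw [hT, Finset.card_image_of_injOn ginj, Finset.card_range]
  have chT : s(f 0, f 2) ∉ T := by
    intro hmem
    rw [hT, Finset.mem_image] at hmem
    obtain ⟨i, hi, hgi⟩ := hmem
    rw [mem_range] at hi
    rw [← hmapc, ← hmapch] at hgi
    exact hchd i hi (hf memch (memc i hi) hgi.symm)
  set U : Finset (Sym2 (Fin k)) := insert (s(f 0, f 2)) T with hU
  have cardU : U.card = n + 1 := by rw [hU, Finset.card_insert_of_notMem chT, cardT]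
  have hf02 : f 0 ≠ f 2 := by
    intro heq
    have h01 : g 1 = g 0 := by
      rw [hg]
      simp only []
      rw [Nat.mod_eq_of_lt (by omega : 1 + 1 < n), Nat.mod_eq_of_lt (by omega : 0 + 1 < n)]
      rw [← heq]
      exact Sym2.eq_swap
    have := ginj 1 (mem_range.mpr (by omega)) 0 (mem_range.mpr (by omega)) h01
    omega
  -- degree of v in T is even
  have degT : ∀ v : Fin k, ∃ m, ∑ e ∈ T, dv v e = 2 * m := by
    intro v
    refine ⟨∑ i ∈ range n, if f i = v then 1 else 0, ?_⟩
    rw [hT, Finset.sum_image ginj]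
    have : ∀ i ∈ range n, dv v (g i)
        = (if f i = v then 1 else 0) + (if f ((i+1) % n) = v then 1 else 0) := by
      intro i _; rfl
    rw [Finset.sum_congr rfl this, Finset.sum_add_distrib,
      sum_shift (fun i => if f i = v then 1 else 0) n hn0]
    ring
  have hsub : U ⊆ Finset.univ := Finset.subset_univ U
  set W : Finset (Sym2 (Fin k)) := Finset.univ \ U with hW
  have degsplit : ∀ v : Fin k, ∑ e ∈ W, dv v e + ∑ e ∈ U, dv v e = k + 1 := by
    intro v
    rw [hW, Finset.sum_sdiff hsub, dv_univ]
  have oddW : ∀ v : Fin k, dv v (s(f 0, f 2)) = 1 → ∃ e ∈ W, v ∈ e := by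
    intro v hone
    have degU : ∑ e ∈ U, dv v e = dv v (s(f 0, f 2)) + ∑ e ∈ T, dv v e := by
      rw [hU, Finset.sum_insert chT]
    obtain ⟨m, hm⟩ := degT v
    obtain ⟨t, ht⟩ := hk
    have hWodd : ∑ e ∈ W, dv v e ≠ 0 := by
      have := degsplit v
      rw [degU, hone, hm] at this
      omega
    obtain ⟨e, he, hdv⟩ : ∃ e ∈ W, dv v e ≠ 0 := by
      by_contra hc
      push_neg at hc
      exact hWodd (Finset.sum_eq_zero hc)
    exact ⟨e, he, mem_of_dv_ne v e hdv⟩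
  obtain ⟨e1, he1, hv1⟩ := oddW (f 0) (by simp [hf02, Ne.symm hf02])
  obtain ⟨e2, he2, hv2⟩ := oddW (f 2) (by simp [hf02, Ne.symm hf02])
  have hne : e1 ≠ e2 := by
    intro heq
    subst heq
    have : e1 = s(f 0, f 2) := (Sym2.mem_and_mem_iff hf02).mp ⟨hv1, hv2⟩
    rw [hW, Finset.mem_sdiff] at he1
    exact he1.2 (this ▸ Finset.mem_insert_self _ _)
  have two_le : 2 ≤ W.card := by
    have : ({e1, e2} : Finset (Sym2 (Fin k))) ⊆ W := by
      intro e he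
      rcases Finset.mem_insert.mp he with rfl | he
      · exact he1
      · rw [Finset.mem_singleton] at he; subst he; exact he2
    calc 2 = ({e1, e2} : Finset (Sym2 (Fin k))).card := (Finset.card_pair hne).symm
    _ ≤ W.card := Finset.card_le_card this
  have hcards : W.card + U.card = Fintype.card (Sym2 (Fin k)) := by
    rw [hW, Finset.card_sdiff_of_subset hsub, ← Finset.card_univ]
    have := Finset.card_le_card hsub
    rw [Finset.card_univ] at this ⊢
    omega
  have hsym2 : Fintype.card (Sym2 (Fin k)) = (k+1).choose 2 := by
    rw [Sym2.card, Fintype.card_fin]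
  omega




def edgesOf {α : Type*} (L : List α) : List (Sym2 α) :=
  List.zipWith (fun x y => s(x,y)) L L.tail

@[simp] lemma edgesOf_nil {α : Type*} : edgesOf ([] : List α) = [] := rfl
@[simp] lemma edgesOf_single {α : Type*} (x : α) : edgesOf [x] = [] := rfl
@[simp] lemma edgesOf_cons_cons {α : Type*} (x y : α) (l : List α) :
    edgesOf (x :: y :: l) = s(x, y) :: edgesOf (y :: l) := rfl

lemma length_edgesOf {α : Type*} (L : List α) : (edgesOf L).length = L.length - 1 := by
  rw [edgesOf, List.length_zipWith, List.length_tail]; omega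

lemma edgesOf_getElem {α : Type*} (L : List α) (i : ℕ) (h : i < (edgesOf L).length) :
    (edgesOf L)[i] = s(L[i]'(by rw [length_edgesOf] at h; omega),
      L[i+1]'(by rw [length_edgesOf] at h; omega)) := by
  have h2 : i < L.tail.length := by
    rw [List.length_tail]; rw [length_edgesOf] at h; omega
  unfold edgesOf
  show (List.zipWith (fun x y => s(x, y)) L L.tail)[i]'(by simpa [edgesOf] using h) = _
  simp only [List.getElem_zipWith, List.getElem_tail]

section Detour

variable {k : ℕ}

def zig (y : ℕ → Fin (k+2)) : Fin (k+2) → Fin (k+2) → ℕ → ℕ → List (Fin (k+2))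
  | _, _, _, 0 => []
  | c, d, j, (r+1) => y j :: c :: zig y d c (j+1) r

lemma zig_length (y : ℕ → Fin (k+2)) (c d : Fin (k+2)) (j r : ℕ) :
    (zig y c d j r).length = 2 * r := by
  induction r generalizing c d j with
  | zero => rfl
  | succ r ih => simp only [zig, List.length_cons, ih]; omega

def PP (c d : Fin (k+2)) (i : ℕ) : Fin (k+2) := if i % 2 = 0 then c else d

lemma PP_succ (c d : Fin (k+2)) (i : ℕ) : PP c d (i+1) = PP d c i := by
  unfold PP
  by_cases h : i % 2 = 0
  · have h1 : (i+1) % 2 = 1 := by omega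
    simp [h, h1]
  · have h1 : (i+1) % 2 = 0 := by omega
    simp [h, h1]

lemma PP_mem (c d : Fin (k+2)) (i : ℕ) : PP c d i = c ∨ PP c d i = d := by
  unfold PP; split <;> simp

def blocks (y : ℕ → Fin (k+2)) (c d : Fin (k+2)) (j r : ℕ) : List (Sym2 (Fin (k+2))) :=
  (List.range r).flatMap (fun i => [s(PP c d i, y (j+i)), s(y (j+i), PP c d (i+1))])

lemma zig_edges (y : ℕ → Fin (k+2)) (c d : Fin (k+2)) (j r : ℕ) (rest : List (Fin (k+2))) :
    edgesOf (c :: (zig y d c j r ++ rest))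
      = blocks y c d j r ++ edgesOf (PP c d r :: rest) := by
  induction r generalizing c d j with
  | zero => simp [zig, blocks, PP]
  | succ r ih =>
    have hz : zig y d c j (r+1) = y j :: d :: zig y c d (j+1) r := rfl
    rw [hz, List.cons_append, List.cons_append, edgesOf_cons_cons, edgesOf_cons_cons,
      ih d c (j+1)]
    have hfun : (fun i => [s(PP d c i, y (j+1+i)), s(y (j+1+i), PP d c (i+1))])
        = (fun i => [s(PP c d (i+1), y (j+(i+1))), s(y (j+(i+1)), PP c d (i+1+1))]) := by
      funext i
      have harith : j + 1 + i = j + (i+1) := by omega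
      rw [harith, PP_succ c d i, PP_succ c d (i+1)]
    rw [blocks, blocks, hfun]
    rw [List.range_succ_eq_map, List.flatMap_cons, List.flatMap_map]
    have h0 : PP c d 0 = c := rfl
    have h1 : PP c d 1 = d := rfl
    have h2 : PP c d (r+1) = PP d c r := PP_succ c d r
    simp only [Nat.add_zero, h0, h1, h2, Nat.succ_eq_add_one]
    rfl

end Detour


def Spec (k n : ℕ) : Prop :=
  ∃ w : ℕ → Fin k, w n = w 0 ∧
    (∀ i < n, ∀ j < n, s(w i, w (i+1)) = s(w j, w (j+1)) → i = j) ∧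
    (∀ i < n, s(w 0, w 2) ≠ s(w i, w (i+1)))

lemma mem_cycle {n : ℕ} (i : ℕ) (hi : i < n) :
    s((i:ℕ), (i+1) % n) ∈ chordedCycleEdges n 2 :=
  Or.inl ⟨i, hi, rfl⟩

lemma chord_mem {n : ℕ} : s((0:ℕ), 2) ∈ chordedCycleEdges n 2 := Or.inr rfl

lemma spec_embeds {k n : ℕ} (hn : 4 ≤ n) (h : Spec k n) :
    EmbedsInKStar (chordedCycleEdges n 2) k := by
  obtain ⟨w, hcl, hinj, hch⟩ := h
  have hn0 : 0 < n := by omega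
  refine ⟨fun i => w (i % n), ?_⟩
  have key : ∀ i < n, Sym2.map (fun i => w (i % n)) s((i:ℕ), (i+1) % n)
      = s(w i, w (i+1)) := by
    intro i hi
    rw [Sym2.map_pair_eq]
    have h1 : i % n = i := Nat.mod_eq_of_lt hi
    have h2 : w ((i+1) % n % n) = w (i+1) := by
      rcases Nat.lt_or_ge (i+1) n with h' | h'
      · rw [Nat.mod_eq_of_lt (Nat.mod_lt _ hn0), Nat.mod_eq_of_lt h']
      · have : i + 1 = n := by omega
        rw [this, Nat.mod_self, Nat.zero_mod, ← hcl]
    simp only [h1, h2]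
  have keych : Sym2.map (fun i => w (i % n)) s((0:ℕ), 2) = s(w 0, w 2) := by
    rw [Sym2.map_pair_eq]
    have h0 : (0:ℕ) % n = 0 := Nat.zero_mod n
    have h2 : 2 % n = 2 := Nat.mod_eq_of_lt (by omega)
    simp only [h0, h2]
  rintro e1 (⟨i, hi, rfl⟩ | rfl) e2 (⟨j, hj, rfl⟩ | rfl) heq
  · simp only [Set.mem_Iio] at hi hj
    rw [key i hi, key j hj] at heq
    rw [hinj i hi j hj heq]
  · simp only [Set.mem_Iio] at hi
    rw [key i hi, keych] at heq
    exact absurd heq.symm (hch i hi)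
  · simp only [Set.mem_Iio] at hj
    rw [key j hj, keych] at heq
    exact absurd heq (hch j hj)
  · rfl


end CC

namespace CC2
open CC

variable {k : ℕ}

def AA (k : ℕ) : Fin (k+2) := ⟨k, by omega⟩
def BB (k : ℕ) : Fin (k+2) := ⟨k+1, by omega⟩
def YY (v : Fin k) (j : ℕ) : Fin (k+2) :=
  ⟨(v.val + j) % k, by have h1 := v.isLt; have h2 := Nat.mod_lt (v.val + j) (show 0 < k by omega); omega⟩

lemma AA_val : (AA k).val = k := rfl
lemma BB_val : (BB k).val = k + 1 := rfl
lemma YY_lt (v : Fin k) (j : ℕ) : (YY v j).val < k := by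
  have h1 := v.isLt
  exact Nat.mod_lt _ (by omega)

lemma YY_val_inj (v : Fin k) {j j' : ℕ} (hj : j < k) (hj' : j' < k)
    (h : (YY v j).val = (YY v j').val) : j = j' := by
  have h' : (v.val + j) % k = (v.val + j') % k := h
  have h2 : j ≡ j' [MOD k] := Nat.ModEq.add_left_cancel' v.val h'
  have h3 : j % k = j' % k := h2
  rwa [Nat.mod_eq_of_lt hj, Nat.mod_eq_of_lt hj'] at h3

lemma PP_ge {c d : Fin (k+2)}
    (hcd : (c = AA k ∧ d = BB k) ∨ (c = BB k ∧ d = AA k)) (m : ℕ) :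
    k ≤ (PP c d m).val := by
  rcases PP_mem c d m with h | h <;> rw [h] <;> rcases hcd with ⟨h1, h2⟩ | ⟨h1, h2⟩ <;>
    simp [h1, h2, AA, BB]

lemma mem_blocks_elim (v : Fin k) {c d : Fin (k+2)} {j r : ℕ}
    (hcd : (c = AA k ∧ d = BB k) ∨ (c = BB k ∧ d = AA k)) {e : Sym2 (Fin (k+2))}
    (he : e ∈ blocks (YY v) c d j r) :
    ∃ i, j ≤ i ∧ i < j + r ∧ ∃ P : Fin (k+2), k ≤ P.val ∧ e = s(P, YY v i) := by
  rw [blocks, List.mem_flatMap] at he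
  obtain ⟨i0, hi0, he⟩ := he
  rw [List.mem_range] at hi0
  refine ⟨j + i0, by omega, by omega, ?_⟩
  rcases List.mem_cons.mp he with rfl | he
  · exact ⟨PP c d i0, PP_ge hcd i0, rfl⟩
  · rcases List.mem_cons.mp he with rfl | he
    · exact ⟨PP c d (i0+1), PP_ge hcd (i0+1), Sym2.eq_swap⟩
    · simp at he

lemma blocks_nodup (v : Fin k) {c d : Fin (k+2)} {j r : ℕ}
    (hcd : (c = AA k ∧ d = BB k) ∨ (c = BB k ∧ d = AA k)) (hne : c ≠ d)
    (hjr : j + r ≤ k) :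
    (blocks (YY v) c d j r).Nodup := by
  rw [blocks, List.nodup_flatMap]
  constructor
  · intro i _
    refine List.nodup_cons.mpr ⟨?_, List.nodup_singleton _⟩
    rw [List.mem_singleton]
    intro h
    rcases Sym2.eq_iff.mp h with ⟨h1, h2⟩ | ⟨h1, h2⟩
    · have hv1 := congrArg Fin.val h1
      have hv2 := YY_lt v (j+i)
      have hv3 := PP_ge hcd i
      omega
    · have h3 : PP c d i = PP d c i := h1.trans (PP_succ c d i)
      unfold PP at h3
      split at h3
      · exact hne h3
      · exact hne h3.symm
  · have hpw := List.pairwise_lt_range (n := r)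
    refine hpw.imp_of_mem ?_
    intro i i' hi hi' hlt
    rw [List.mem_range] at hi hi'
    intro e he1 he2
    have hshape : ∃ P : Fin (k+2), k ≤ P.val ∧ e = s(P, YY v (j+i)) := by
      rcases List.mem_cons.mp he1 with rfl | h
      · exact ⟨PP c d i, PP_ge hcd i, rfl⟩
      · rcases List.mem_cons.mp h with rfl | h
        · exact ⟨PP c d (i+1), PP_ge hcd (i+1), Sym2.eq_swap⟩
        · simp at h
    have hy2 : YY v (j+i') ∈ e := by
      rcases List.mem_cons.mp he2 with rfl | h
      · exact Sym2.mem_mk_right _ _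
      · rcases List.mem_cons.mp h with rfl | h
        · exact Sym2.mem_mk_left _ _
        · simp at h
    obtain ⟨P, hP, rfl⟩ := hshape
    rcases Sym2.mem_iff.mp hy2 with h | h
    · have := congrArg Fin.val h
      have := YY_lt v (j+i')
      omega
    · have := YY_val_inj v (by omega) (by omega) (congrArg Fin.val h)
      omega


variable {k : ℕ}

lemma sym2_vals {m : ℕ} {x1 x2 z1 z2 : Fin m} (h : s(x1,x2) = s(z1,z2)) :
    (x1.val = z1.val ∧ x2.val = z2.val) ∨ (x1.val = z2.val ∧ x2.val = z1.val) := by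
  rcases Sym2.eq_iff.mp h with ⟨h1, h2⟩ | ⟨h1, h2⟩
  · exact Or.inl ⟨congrArg Fin.val h1, congrArg Fin.val h2⟩
  · exact Or.inr ⟨congrArg Fin.val h1, congrArg Fin.val h2⟩

lemma yw_not_mem_blocks (v : Fin k) {c d : Fin (k+2)} {j r : ℕ}
    (hcd : (c = AA k ∧ d = BB k) ∨ (c = BB k ∧ d = AA k)) (hjr : j + r ≤ k)
    {j0 : ℕ} (hj0 : j0 < j) (W : Fin (k+2)) (hW : k ≤ W.val) :
    s(YY v j0, W) ∉ blocks (YY v) c d j r := by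
  intro h
  obtain ⟨i, hi1, hi2, P, hP, heq⟩ := mem_blocks_elim v hcd h
  rcases sym2_vals heq with ⟨h1, h2⟩ | ⟨h1, h2⟩
  · have := YY_lt v j0; omega
  · have h3 := YY_val_inj v (show j0 < k by omega) (show i < k by omega) h1
    omega

lemma ww_not_mem_blocks (v : Fin k) {c d : Fin (k+2)} {j r : ℕ}
    (hcd : (c = AA k ∧ d = BB k) ∨ (c = BB k ∧ d = AA k))
    {W1 W2 : Fin (k+2)} (h1 : k ≤ W1.val) (h2 : k ≤ W2.val) :
    s(W1, W2) ∉ blocks (YY v) c d j r := by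
  intro h
  obtain ⟨i, hi1, hi2, P, hP, heq⟩ := mem_blocks_elim v hcd h
  have hy := YY_lt v i
  rcases sym2_vals heq with ⟨ha, hb⟩ | ⟨ha, hb⟩ <;> omega

def GoodList (k : ℕ) (v : Fin k) (d : ℕ) : Prop :=
  ∃ L : List (Fin (k+2)), L.length = d + 1 ∧ L.getD 0 (YY v 0) = YY v 0 ∧
    L.getD d (YY v 0) = YY v 0 ∧ (edgesOf L).Nodup ∧
    (∀ e ∈ edgesOf L, ∃ x ∈ e, k ≤ x.val)

lemma getD_concat {α : Type*} (M : List α) (x u : α) :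
    (M ++ [x]).getD M.length u = x := by
  rw [List.getD_eq_getElem _ _ (by simp)]
  rw [List.getElem_append_right (Nat.le_refl M.length)]
  simp

lemma goodF1 (v : Fin k) (r : ℕ) (hr : r % 2 = 0) (hrk : r + 1 ≤ k) :
    GoodList k v (2*r+5) := by
  set A := AA k with hAdef
  set B := BB k with hBdef
  set Y := YY v with hYdef
  have hcd : (B = AA k ∧ A = BB k) ∨ (B = BB k ∧ A = AA k) := Or.inr ⟨rfl, rfl⟩
  have hA : A.val = k := rfl
  have hB : B.val = k+1 := rfl
  have hY0 : (Y 0).val < k := YY_lt v 0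
  have hjr : 1 + r ≤ k := by omega
  have hPP : PP B A r = B := by unfold PP; rw [if_pos hr]
  have hE : edgesOf (Y 0 :: A :: A :: B :: B :: (zig Y A B 1 r ++ [Y 0]))
      = s(Y 0, A) :: s(A,A) :: s(A,B) :: s(B,B) :: (blocks Y B A 1 r ++ [s(B, Y 0)]) := by
    rw [edgesOf_cons_cons, edgesOf_cons_cons, edgesOf_cons_cons, edgesOf_cons_cons,
      zig_edges Y B A 1 r [Y 0], hPP]
    rfl
  refine ⟨Y 0 :: A :: A :: B :: B :: (zig Y A B 1 r ++ [Y 0]), ?_, rfl, ?_, ?_, ?_⟩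
  · simp only [List.length_cons, List.length_append, zig_length, List.length_singleton,
      List.length_nil]
    try omega
  · have hM : Y 0 :: A :: A :: B :: B :: (zig Y A B 1 r ++ [Y 0])
        = (Y 0 :: A :: A :: B :: B :: zig Y A B 1 r) ++ [Y 0] := by simp
    have hlen : (Y 0 :: A :: A :: B :: B :: zig Y A B 1 r).length = 2*r+5 := by
      simp only [List.length_cons, zig_length]
      try omega
    rw [hM, ← hlen, getD_concat]
  · rw [hE]
    refine List.nodup_cons.mpr ⟨?_, List.nodup_cons.mpr ⟨?_, List.nodup_cons.mpr ⟨?_,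
      List.nodup_cons.mpr ⟨?_, List.Nodup.append ?_ ?_ ?_⟩⟩⟩⟩
    · simp only [List.mem_cons, List.mem_append, List.mem_singleton, List.not_mem_nil, or_false]
      rintro (h | h | h | h)
      · rcases sym2_vals h with ⟨h1,h2⟩|⟨h1,h2⟩ <;> omega
      · rcases sym2_vals h with ⟨h1,h2⟩|⟨h1,h2⟩ <;> omega
      · rcases sym2_vals h with ⟨h1,h2⟩|⟨h1,h2⟩ <;> omega
      · rcases h with h | h
        · exact yw_not_mem_blocks v hcd hjr (by omega) A (by omega) h
        · rcases sym2_vals h with ⟨h1,h2⟩|⟨h1,h2⟩ <;> omega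
    · simp only [List.mem_cons, List.mem_append, List.mem_singleton, List.not_mem_nil, or_false]
      rintro (h | h | h)
      · rcases sym2_vals h with ⟨h1,h2⟩|⟨h1,h2⟩ <;> omega
      · rcases sym2_vals h with ⟨h1,h2⟩|⟨h1,h2⟩ <;> omega
      · rcases h with h | h
        · exact ww_not_mem_blocks v hcd (by omega) (by omega) h
        · rcases sym2_vals h with ⟨h1,h2⟩|⟨h1,h2⟩ <;> omega
    · simp only [List.mem_cons, List.mem_append, List.mem_singleton, List.not_mem_nil, or_false]
      rintro (h | h)
      · rcases sym2_vals h with ⟨h1,h2⟩|⟨h1,h2⟩ <;> omega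
      · rcases h with h | h
        · exact ww_not_mem_blocks v hcd (by omega) (by omega) h
        · rcases sym2_vals h with ⟨h1,h2⟩|⟨h1,h2⟩ <;> omega
    · simp only [List.mem_append, List.mem_singleton, List.not_mem_nil, or_false]
      rintro (h | h)
      · exact ww_not_mem_blocks v hcd (by omega) (by omega) h
      · rcases sym2_vals h with ⟨h1,h2⟩|⟨h1,h2⟩ <;> omega
    · refine blocks_nodup v hcd ?_ hjr
      intro hBA
      have := congrArg Fin.val hBA
      omega
    · exact List.nodup_singleton _
    · intro e he
      obtain ⟨i, hi1, hi2, P, hP, rfl⟩ := mem_blocks_elim v hcd he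
      simp only [List.mem_singleton, List.mem_cons, List.not_mem_nil, or_false]
      intro h
      rcases sym2_vals h with ⟨h1,h2⟩|⟨h1,h2⟩
      · have := YY_lt v i
        have h3 := YY_val_inj v (show i < k by omega) (show 0 < k by omega) h2
        omega
      · have := YY_lt v i; omega
  · rw [hE]
    intro e he
    simp only [List.mem_cons, List.mem_append, List.mem_singleton, List.not_mem_nil,
      or_false] at he
    rcases he with rfl | rfl | rfl | rfl | he | rfl
    · exact ⟨A, Sym2.mem_mk_right _ _, by omega⟩
    · exact ⟨A, Sym2.mem_mk_right _ _, by omega⟩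
    · exact ⟨A, Sym2.mem_mk_left _ _, by omega⟩
    · exact ⟨B, Sym2.mem_mk_left _ _, by omega⟩
    · obtain ⟨i, hi1, hi2, P, hP, rfl⟩ := mem_blocks_elim v hcd he
      exact ⟨P, Sym2.mem_mk_left _ _, hP⟩
    · exact ⟨B, Sym2.mem_mk_left _ _, by omega⟩


lemma goodF2 (v : Fin k) (r : ℕ) (hr : r % 2 = 0) (hrk : r + 1 ≤ k) :
    GoodList k v (2*r+4) := by
  set A := AA k with hAdef
  set B := BB k with hBdef
  set Y := YY v with hYdef
  have hcd : (B = AA k ∧ A = BB k) ∨ (B = BB k ∧ A = AA k) := Or.inr ⟨rfl, rfl⟩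
  have hA : A.val = k := rfl
  have hB : B.val = k+1 := rfl
  have hY0 : (Y 0).val < k := YY_lt v 0
  have hjr : 1 + r ≤ k := by omega
  have hPP : PP B A r = B := by unfold PP; rw [if_pos hr]
  have hE : edgesOf (Y 0 :: A :: A :: B :: (zig Y A B 1 r ++ [Y 0]))
      = s(Y 0, A) :: s(A,A) :: s(A,B) :: (blocks Y B A 1 r ++ [s(B, Y 0)]) := by
    rw [edgesOf_cons_cons, edgesOf_cons_cons, edgesOf_cons_cons,
      zig_edges Y B A 1 r [Y 0], hPP]
    rfl
  refine ⟨Y 0 :: A :: A :: B :: (zig Y A B 1 r ++ [Y 0]), ?_, rfl, ?_, ?_, ?_⟩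
  · simp only [List.length_cons, List.length_append, zig_length, List.length_singleton,
      List.length_nil]
    try omega
  · have hM : Y 0 :: A :: A :: B :: (zig Y A B 1 r ++ [Y 0])
        = (Y 0 :: A :: A :: B :: zig Y A B 1 r) ++ [Y 0] := by simp
    have hlen : (Y 0 :: A :: A :: B :: zig Y A B 1 r).length = 2*r+4 := by
      simp only [List.length_cons, zig_length]
      try omega
    rw [hM, ← hlen, getD_concat]
  · rw [hE]
    refine List.nodup_cons.mpr ⟨?_, List.nodup_cons.mpr ⟨?_, List.nodup_cons.mpr ⟨?_,
      List.Nodup.append ?_ ?_ ?_⟩⟩⟩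
    · simp only [List.mem_cons, List.mem_append, List.mem_singleton, List.not_mem_nil, or_false]
      rintro (h | h | h)
      · rcases sym2_vals h with ⟨h1,h2⟩|⟨h1,h2⟩ <;> omega
      · rcases sym2_vals h with ⟨h1,h2⟩|⟨h1,h2⟩ <;> omega
      · rcases h with h | h
        · exact yw_not_mem_blocks v hcd hjr (by omega) A (by omega) h
        · rcases sym2_vals h with ⟨h1,h2⟩|⟨h1,h2⟩ <;> omega
    · simp only [List.mem_cons, List.mem_append, List.mem_singleton, List.not_mem_nil, or_false]
      rintro (h | h)
      · rcases sym2_vals h with ⟨h1,h2⟩|⟨h1,h2⟩ <;> omega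
      · rcases h with h | h
        · exact ww_not_mem_blocks v hcd (by omega) (by omega) h
        · rcases sym2_vals h with ⟨h1,h2⟩|⟨h1,h2⟩ <;> omega
    · simp only [List.mem_append, List.mem_singleton, List.not_mem_nil, or_false]
      rintro (h | h)
      · exact ww_not_mem_blocks v hcd (by omega) (by omega) h
      · rcases sym2_vals h with ⟨h1,h2⟩|⟨h1,h2⟩ <;> omega
    · refine blocks_nodup v hcd ?_ hjr
      intro hBA
      have := congrArg Fin.val hBA
      omega
    · exact List.nodup_singleton _
    · intro e he
      obtain ⟨i, hi1, hi2, P, hP, rfl⟩ := mem_blocks_elim v hcd he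
      simp only [List.mem_singleton, List.mem_cons, List.not_mem_nil, or_false]
      intro h
      rcases sym2_vals h with ⟨h1,h2⟩|⟨h1,h2⟩
      · have := YY_lt v i
        have h3 := YY_val_inj v (show i < k by omega) (show 0 < k by omega) h2
        omega
      · have := YY_lt v i; omega
  · rw [hE]
    intro e he
    simp only [List.mem_cons, List.mem_append, List.mem_singleton, List.not_mem_nil,
      or_false] at he
    rcases he with rfl | rfl | rfl | he | rfl
    · exact ⟨A, Sym2.mem_mk_right _ _, by omega⟩
    · exact ⟨A, Sym2.mem_mk_right _ _, by omega⟩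
    · exact ⟨A, Sym2.mem_mk_left _ _, by omega⟩
    · obtain ⟨i, hi1, hi2, P, hP, rfl⟩ := mem_blocks_elim v hcd he
      exact ⟨P, Sym2.mem_mk_left _ _, hP⟩
    · exact ⟨B, Sym2.mem_mk_left _ _, by omega⟩

lemma goodF3 (v : Fin k) (r : ℕ) (hr : r % 2 = 0) (hrk : r + 1 ≤ k) :
    GoodList k v (2*r+3) := by
  set A := AA k with hAdef
  set B := BB k with hBdef
  set Y := YY v with hYdef
  have hcd : (A = AA k ∧ B = BB k) ∨ (A = BB k ∧ B = AA k) := Or.inl ⟨rfl, rfl⟩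
  have hA : A.val = k := rfl
  have hB : B.val = k+1 := rfl
  have hY0 : (Y 0).val < k := YY_lt v 0
  have hjr : 1 + r ≤ k := by omega
  have hPP : PP A B r = A := by unfold PP; rw [if_pos hr]
  have hE : edgesOf (Y 0 :: A :: (zig Y B A 1 r ++ [B, Y 0]))
      = s(Y 0, A) :: (blocks Y A B 1 r ++ [s(A,B), s(B, Y 0)]) := by
    rw [edgesOf_cons_cons, zig_edges Y A B 1 r [B, Y 0], hPP]
    rfl
  refine ⟨Y 0 :: A :: (zig Y B A 1 r ++ [B, Y 0]), ?_, rfl, ?_, ?_, ?_⟩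
  · simp only [List.length_cons, List.length_append, zig_length, List.length_singleton,
      List.length_nil]
    try omega
  · have hM : Y 0 :: A :: (zig Y B A 1 r ++ [B, Y 0])
        = (Y 0 :: A :: (zig Y B A 1 r ++ [B])) ++ [Y 0] := by simp
    have hlen : (Y 0 :: A :: (zig Y B A 1 r ++ [B])).length = 2*r+3 := by
      simp only [List.length_cons, List.length_append, zig_length, List.length_singleton,
        List.length_nil]
      try omega
    rw [hM, ← hlen, getD_concat]
  · rw [hE]
    refine List.nodup_cons.mpr ⟨?_, List.Nodup.append ?_ ?_ ?_⟩
    · simp only [List.mem_cons, List.mem_append, List.mem_singleton, List.not_mem_nil, or_false]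
      rintro (h | h | h)
      · exact yw_not_mem_blocks v hcd hjr (by omega) A (by omega) h
      · rcases sym2_vals h with ⟨h1,h2⟩|⟨h1,h2⟩ <;> omega
      · rcases sym2_vals h with ⟨h1,h2⟩|⟨h1,h2⟩ <;> omega
    · refine blocks_nodup v hcd ?_ hjr
      intro hABeq
      have := congrArg Fin.val hABeq
      omega
    · refine List.nodup_cons.mpr ⟨?_, List.nodup_singleton _⟩
      simp only [List.mem_singleton]
      intro h
      rcases sym2_vals h with ⟨h1,h2⟩|⟨h1,h2⟩ <;> omega
    · intro e he
      obtain ⟨i, hi1, hi2, P, hP, rfl⟩ := mem_blocks_elim v hcd he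
      simp only [List.mem_cons, List.mem_singleton, List.not_mem_nil, or_false]
      rintro (h | h)
      · have := YY_lt v i
        rcases sym2_vals h with ⟨h1,h2⟩|⟨h1,h2⟩ <;> omega
      · rcases sym2_vals h with ⟨h1,h2⟩|⟨h1,h2⟩
        · have := YY_lt v i
          have h3 := YY_val_inj v (show i < k by omega) (show 0 < k by omega) h2
          omega
        · have := YY_lt v i; omega
  · rw [hE]
    intro e he
    simp only [List.mem_cons, List.mem_append, List.mem_singleton, List.not_mem_nil,
      or_false] at he
    rcases he with rfl | he | rfl | rfl
    · exact ⟨A, Sym2.mem_mk_right _ _, by omega⟩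
    · obtain ⟨i, hi1, hi2, P, hP, rfl⟩ := mem_blocks_elim v hcd he
      exact ⟨P, Sym2.mem_mk_left _ _, hP⟩
    · exact ⟨A, Sym2.mem_mk_left _ _, by omega⟩
    · exact ⟨B, Sym2.mem_mk_left _ _, by omega⟩

lemma goodF4 (v : Fin k) (r : ℕ) (hr : r % 2 = 0) (hrk : r + 2 ≤ k) :
    GoodList k v (2*r+6) := by
  set A := AA k with hAdef
  set B := BB k with hBdef
  set Y := YY v with hYdef
  have hcd : (B = AA k ∧ A = BB k) ∨ (B = BB k ∧ A = AA k) := Or.inr ⟨rfl, rfl⟩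
  have hA : A.val = k := rfl
  have hB : B.val = k+1 := rfl
  have hY0 : (Y 0).val < k := YY_lt v 0
  have hY1 : (Y 1).val < k := YY_lt v 1
  have hY01 : (Y 0).val ≠ (Y 1).val := by
    intro h
    have := YY_val_inj v (show 0 < k by omega) (show 1 < k by omega) h
    omega
  have hjr : 2 + r ≤ k := by omega
  have hPP : PP B A r = B := by unfold PP; rw [if_pos hr]
  have hE : edgesOf (Y 0 :: A :: A :: Y 1 :: B :: B :: (zig Y A B 2 r ++ [Y 0]))
      = s(Y 0, A) :: s(A,A) :: s(A, Y 1) :: s(Y 1, B) :: s(B,B) ::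
        (blocks Y B A 2 r ++ [s(B, Y 0)]) := by
    rw [edgesOf_cons_cons, edgesOf_cons_cons, edgesOf_cons_cons, edgesOf_cons_cons,
      edgesOf_cons_cons, zig_edges Y B A 2 r [Y 0], hPP]
    rfl
  refine ⟨Y 0 :: A :: A :: Y 1 :: B :: B :: (zig Y A B 2 r ++ [Y 0]), ?_, rfl, ?_, ?_, ?_⟩
  · simp only [List.length_cons, List.length_append, zig_length, List.length_singleton,
      List.length_nil]
    try omega
  · have hM : Y 0 :: A :: A :: Y 1 :: B :: B :: (zig Y A B 2 r ++ [Y 0])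
        = (Y 0 :: A :: A :: Y 1 :: B :: B :: zig Y A B 2 r) ++ [Y 0] := by simp
    have hlen : (Y 0 :: A :: A :: Y 1 :: B :: B :: zig Y A B 2 r).length = 2*r+6 := by
      simp only [List.length_cons, zig_length]
      try omega
    rw [hM, ← hlen, getD_concat]
  · rw [hE]
    refine List.nodup_cons.mpr ⟨?_, List.nodup_cons.mpr ⟨?_, List.nodup_cons.mpr ⟨?_,
      List.nodup_cons.mpr ⟨?_, List.nodup_cons.mpr ⟨?_, List.Nodup.append ?_ ?_ ?_⟩⟩⟩⟩⟩
    · simp only [List.mem_cons, List.mem_append, List.mem_singleton, List.not_mem_nil, or_false]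
      rintro (h | h | h | h | h)
      · rcases sym2_vals h with ⟨h1,h2⟩|⟨h1,h2⟩ <;> omega
      · rcases sym2_vals h with ⟨h1,h2⟩|⟨h1,h2⟩ <;> omega
      · rcases sym2_vals h with ⟨h1,h2⟩|⟨h1,h2⟩ <;> omega
      · rcases sym2_vals h with ⟨h1,h2⟩|⟨h1,h2⟩ <;> omega
      · rcases h with h | h
        · exact yw_not_mem_blocks v hcd hjr (by omega) A (by omega) h
        · rcases sym2_vals h with ⟨h1,h2⟩|⟨h1,h2⟩ <;> omega
    · simp only [List.mem_cons, List.mem_append, List.mem_singleton, List.not_mem_nil, or_false]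
      rintro (h | h | h | h)
      · rcases sym2_vals h with ⟨h1,h2⟩|⟨h1,h2⟩ <;> omega
      · rcases sym2_vals h with ⟨h1,h2⟩|⟨h1,h2⟩ <;> omega
      · rcases sym2_vals h with ⟨h1,h2⟩|⟨h1,h2⟩ <;> omega
      · rcases h with h | h
        · exact ww_not_mem_blocks v hcd (by omega) (by omega) h
        · rcases sym2_vals h with ⟨h1,h2⟩|⟨h1,h2⟩ <;> omega
    · simp only [List.mem_cons, List.mem_append, List.mem_singleton, List.not_mem_nil, or_false]
      rintro (h | h | h)
      · rcases sym2_vals h with ⟨h1,h2⟩|⟨h1,h2⟩ <;> omega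
      · rcases sym2_vals h with ⟨h1,h2⟩|⟨h1,h2⟩ <;> omega
      · rcases h with h | h
        · have h' : s(Y 1, A) ∈ blocks Y B A 2 r := by
            rw [show s(Y 1, A) = s(A, Y 1) from Sym2.eq_swap]
            exact h
          exact yw_not_mem_blocks v hcd hjr (by omega) A (by omega) h'
        · rcases sym2_vals h with ⟨h1,h2⟩|⟨h1,h2⟩ <;> omega
    · simp only [List.mem_cons, List.mem_append, List.mem_singleton, List.not_mem_nil, or_false]
      rintro (h | h | h)
      · rcases sym2_vals h with ⟨h1,h2⟩|⟨h1,h2⟩ <;> omega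
      · exact yw_not_mem_blocks v hcd hjr (by omega) B (by omega) h
      · rcases sym2_vals h with ⟨h1,h2⟩|⟨h1,h2⟩ <;> omega
    · simp only [List.mem_append, List.mem_singleton, List.not_mem_nil, or_false]
      rintro (h | h)
      · exact ww_not_mem_blocks v hcd (by omega) (by omega) h
      · rcases sym2_vals h with ⟨h1,h2⟩|⟨h1,h2⟩ <;> omega
    · refine blocks_nodup v hcd ?_ hjr
      intro hBA
      have := congrArg Fin.val hBA
      omega
    · exact List.nodup_singleton _
    · intro e he
      obtain ⟨i, hi1, hi2, P, hP, rfl⟩ := mem_blocks_elim v hcd he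
      simp only [List.mem_singleton, List.mem_cons, List.not_mem_nil, or_false]
      intro h
      rcases sym2_vals h with ⟨h1,h2⟩|⟨h1,h2⟩
      · have := YY_lt v i
        have h3 := YY_val_inj v (show i < k by omega) (show 0 < k by omega) h2
        omega
      · have := YY_lt v i; omega
  · rw [hE]
    intro e he
    simp only [List.mem_cons, List.mem_append, List.mem_singleton, List.not_mem_nil,
      or_false] at he
    rcases he with rfl | rfl | rfl | rfl | rfl | he | rfl
    · exact ⟨A, Sym2.mem_mk_right _ _, by omega⟩
    · exact ⟨A, Sym2.mem_mk_right _ _, by omega⟩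
    · exact ⟨A, Sym2.mem_mk_left _ _, by omega⟩
    · exact ⟨B, Sym2.mem_mk_right _ _, by omega⟩
    · exact ⟨B, Sym2.mem_mk_left _ _, by omega⟩
    · obtain ⟨i, hi1, hi2, P, hP, rfl⟩ := mem_blocks_elim v hcd he
      exact ⟨P, Sym2.mem_mk_left _ _, hP⟩
    · exact ⟨B, Sym2.mem_mk_left _ _, by omega⟩




lemma good_of_d (v : Fin k) (hko : Odd k) (hk5 : 5 ≤ k) (d : ℕ)
    (h3 : 3 ≤ d) (hdk : d ≤ 2*k+3) : GoodList k v d := by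
  obtain ⟨t, hko⟩ := hko
  rcases (show d % 4 = 0 ∨ d % 4 = 1 ∨ d % 4 = 2 ∨ d % 4 = 3 by omega) with h | h | h | h
  · rw [show d = 2*((d-4)/2)+4 by omega]
    exact goodF2 v _ (by omega) (by omega)
  · rw [show d = 2*((d-5)/2)+5 by omega]
    exact goodF1 v _ (by omega) (by omega)
  · rw [show d = 2*((d-6)/2)+6 by omega]
    exact goodF4 v _ (by omega) (by omega)
  · rw [show d = 2*((d-3)/2)+3 by omega]
    exact goodF3 v _ (by omega) (by omega)

lemma YY0_eq (v : Fin k) : YY v 0 = Fin.castLE (by omega : k ≤ k+2) v := by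
  apply Fin.ext
  simp [YY, Fin.coe_castLE, Nat.mod_eq_of_lt v.isLt]

lemma detour (hko : Odd k) (hk5 : 5 ≤ k) (v : Fin k) (d : ℕ) (h3 : 3 ≤ d)
    (hdk : d ≤ 2*k+3) :
    ∃ D : ℕ → Fin (k+2), D 0 = Fin.castLE (by omega) v ∧ D d = Fin.castLE (by omega) v ∧
      (∀ i < d, ∀ j < d, s(D i, D (i+1)) = s(D j, D (j+1)) → i = j) ∧
      (∀ i < d, k ≤ (D i).val ∨ k ≤ (D (i+1)).val) := by
  obtain ⟨L, hlen, h0, hd, hnd, hnew⟩ := good_of_d v hko hk5 d h3 hdk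
  have hedge : ∀ i, i < d → ∀ hi : i < (edgesOf L).length,
      s(L.getD i (YY v 0), L.getD (i+1) (YY v 0)) = (edgesOf L)[i] := by
    intro i hi hie
    have h1 : i < L.length := by omega
    have h2 : i + 1 < L.length := by omega
    rw [List.getD_eq_getElem _ _ h1, List.getD_eq_getElem _ _ h2, edgesOf_getElem L i hie]
  have hElen : (edgesOf L).length = d := by rw [length_edgesOf]; omega
  refine ⟨fun i => L.getD i (YY v 0), ?_, ?_, ?_, ?_⟩
  · show L.getD 0 (YY v 0) = _
    rw [h0, YY0_eq]
  · show L.getD d (YY v 0) = _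
    rw [hd, YY0_eq]
  · intro i hi j hj heq
    have hie : i < (edgesOf L).length := by omega
    have hje : j < (edgesOf L).length := by omega
    rw [hedge i hi hie, hedge j hj hje] at heq
    exact (List.Nodup.getElem_inj_iff hnd).mp heq
  · intro i hi
    have hie : i < (edgesOf L).length := by omega
    obtain ⟨x, hx, hxk⟩ := hnew _ (List.getElem_mem hie)
    rw [← hedge i hi hie] at hx
    rcases Sym2.mem_iff.mp hx with rfl | rfl
    · exact Or.inl hxk
    · exact Or.inr hxk

lemma spec_mono {n : ℕ} (h : Spec k n) : Spec (k+2) n := by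
  obtain ⟨w, hcl, hinj, hch⟩ := h
  have hι : Function.Injective (Fin.castLE (by omega : k ≤ k + 2)) :=
    Fin.castLE_injective _
  have hmap := Sym2.map.injective hι
  refine ⟨fun i => Fin.castLE (by omega) (w i), ?_, ?_, ?_⟩
  · show Fin.castLE _ (w n) = Fin.castLE _ (w 0)
    rw [hcl]
  · intro i hi j hj heq
    apply hinj i hi j hj
    apply hmap
    rw [Sym2.map_pair_eq, Sym2.map_pair_eq]
    exact heq
  · intro i hi heq
    apply hch i hi
    apply hmap
    rw [Sym2.map_pair_eq, Sym2.map_pair_eq]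
    exact heq

lemma splice {n0 d : ℕ} (hh : 4 ≤ n0) (hs : Spec k n0) (hko : Odd k) (hk5 : 5 ≤ k)
    (hd3 : 3 ≤ d) (hdk : d ≤ 2*k+3) : Spec (k+2) (n0 + d) := by
  obtain ⟨w, hcl, hinj, hch⟩ := hs
  obtain ⟨D, hD0, hDd, hDinj, hDnew⟩ := detour hko hk5 (w 0) d hd3 hdk
  set ι : Fin k → Fin (k+2) := Fin.castLE (by omega) with hι
  set w' : ℕ → Fin (k+2) := fun i => if i < n0 then ι (w i) else D (i - n0) with hw'
  have hold : ∀ j ≤ n0, w' j = ι (w j) := by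
    intro j hj
    rcases Nat.lt_or_ge j n0 with h | h
    · simp [hw', h]
    · have hj0 : j = n0 := by omega
      rw [hj0]
      show (if n0 < n0 then ι (w n0) else D (n0 - n0)) = ι (w n0)
      rw [if_neg (lt_irrefl n0), Nat.sub_self, hD0, hcl]
  have hnew : ∀ j, n0 ≤ j → w' j = D (j - n0) := by
    intro j hj
    rcases Nat.lt_or_ge j n0 with h | h
    · omega
    · simp [hw', Nat.not_lt.mpr h]
  have hvold : ∀ x : Fin k, (ι x).val < k := by
    intro x
    rw [hι, Fin.coe_castLE]
    exact x.isLt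
  have eOld : ∀ i < n0, s(w' i, w' (i+1)) = s(ι (w i), ι (w (i+1))) := by
    intro i hi
    rw [hold i (by omega), hold (i+1) (by omega)]
  have eNew : ∀ i, n0 ≤ i → i < n0 + d → s(w' i, w' (i+1)) = s(D (i-n0), D (i-n0+1)) := by
    intro i hi1 hi2
    rw [hnew i hi1, hnew (i+1) (by omega), show i + 1 - n0 = i - n0 + 1 by omega]
  have disj : ∀ i, n0 ≤ i → i < n0 + d → ∀ x y : Fin k,
      s(D (i-n0), D (i-n0+1)) ≠ s(ι x, ι y) := by
    intro i hi1 hi2 x y heq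
    have hd1 := hDnew (i - n0) (by omega)
    rcases sym2_vals heq with ⟨h1, h2⟩ | ⟨h1, h2⟩ <;>
    · have := hvold x
      have := hvold y
      omega
  have hmap := Sym2.map.injective (Fin.castLE_injective (by omega : k ≤ k + 2))
  refine ⟨w', ?_, ?_, ?_⟩
  · rw [hnew (n0+d) (by omega), hold 0 (by omega), show n0 + d - n0 = d by omega, hDd]
  · intro i hi j hj heq
    rcases Nat.lt_or_ge i n0 with hi' | hi' <;> rcases Nat.lt_or_ge j n0 with hj' | hj'
    · rw [eOld i hi', eOld j hj'] at heq
      apply hinj i hi' j hj'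
      apply hmap
      rw [Sym2.map_pair_eq, Sym2.map_pair_eq]
      exact heq
    · rw [eOld i hi', eNew j hj' hj] at heq
      exact absurd heq.symm (disj j hj' hj _ _)
    · rw [eNew i hi' hi, eOld j hj'] at heq
      exact absurd heq (disj i hi' hi _ _)
    · rw [eNew i hi' hi, eNew j hj' hj] at heq
      have := hDinj (i - n0) (by omega) (j - n0) (by omega) heq
      omega
  · intro i hi heq
    rw [hold 0 (by omega), hold 2 (by omega)] at heq
    rcases Nat.lt_or_ge i n0 with hi' | hi'
    · rw [eOld i hi'] at heq
      apply hch i hi'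
      apply hmap
      rw [Sym2.map_pair_eq, Sym2.map_pair_eq]
      exact heq
    · rw [eNew i hi' hi] at heq
      exact disj i hi' hi _ _ heq.symm



lemma choose_step (k : ℕ) : (k+3).choose 2 = (k+1).choose 2 + (2*k+3) := by
  rw [Nat.choose_two_right, Nat.choose_two_right]
  have h1 : k + 3 - 1 = k + 2 := by omega
  have h2 : k + 1 - 1 = k := by omega
  rw [h1, h2]
  obtain ⟨c, hc⟩ := Nat.even_mul_succ_self k
  have e1 : (k+3)*(k+2) = k*(k+1) + (4*k+6) := by ring
  have e2 : (k+1)*k = k*(k+1) := by ring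
  rw [e1, e2, hc]
  omega

lemma base5 : ∀ n, 4 ≤ n → n ≤ 12 → Spec 5 n := by
  intro n h4 h12
  interval_cases n
  · exact ⟨fun i => [0,1,2,3,0].getD i 0, by decide, by decide, by decide⟩
  · exact ⟨fun i => [0,1,2,3,4,0].getD i 0, by decide, by decide, by decide⟩
  · exact ⟨fun i => [0,1,2,2,3,4,0].getD i 0, by decide, by decide, by decide⟩
  · exact ⟨fun i => [0,1,2,2,3,3,4,0].getD i 0, by decide, by decide, by decide⟩
  · exact ⟨fun i => [0,1,2,2,3,3,4,4,0].getD i 0, by decide, by decide, by decide⟩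
  · exact ⟨fun i => [0,1,2,2,3,3,4,4,0,0].getD i 0, by decide, by decide, by decide⟩
  · exact ⟨fun i => [0,1,2,2,3,3,4,4,1,3,0].getD i 0, by decide, by decide, by decide⟩
  · exact ⟨fun i => [0,1,2,2,3,3,4,4,1,1,3,0].getD i 0, by decide, by decide, by decide⟩
  · exact ⟨fun i => [0,1,2,2,3,3,4,4,1,1,3,0,0].getD i 0, by decide, by decide, by decide⟩

lemma Qall : ∀ t : ℕ, ∀ n : ℕ, 4 ≤ n → n ≤ (5+2*t+1).choose 2 - 3 → Spec (5+2*t) n := by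
  intro t
  induction t with
  | zero =>
    intro n h4 hub
    have h15 : (5+2*0+1).choose 2 = 15 := by decide
    exact base5 n h4 (by omega)
  | succ t ih =>
    intro n h4 hub
    set k := 5 + 2*t with hk
    have hko : Odd k := ⟨2 + t, by omega⟩
    have hk5 : 5 ≤ k := by omega
    have hub' : n ≤ (k+3).choose 2 - 3 := by
      have he : 5 + 2*(t+1) + 1 = k + 3 := by omega
      rwa [he] at hub
    have hstep := choose_step k
    have h15 : 15 ≤ (k+1).choose 2 := by
      calc 15 = (6).choose 2 := by decide
      _ ≤ (k+1).choose 2 := Nat.choose_le_choose 2 (by omega)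
    have hgoal : Spec (k+2) n := by
      by_cases hc : n ≤ (k+1).choose 2 - 3
      · exact spec_mono (ih n h4 hc)
      · push_neg at hc
        by_cases hc2 : n ≤ (k+1).choose 2
        · have hs := splice (show 4 ≤ n - 3 by omega) (ih (n-3) (by omega) (by omega))
            hko hk5 (le_refl 3) (by omega)
          rwa [show n - 3 + 3 = n by omega] at hs
        · set dd := n + 3 - (k+1).choose 2 with hdd
          have hs := splice (d := dd) (show 4 ≤ n - dd by omega)
            (ih (n-dd) (by omega) (by omega)) hko hk5 (by omega) (by omega)
          rwa [show n - dd + dd = n by omega] at hs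
    have he2 : 5 + 2*(t+1) = k + 2 := by omega
    rwa [he2]

end CC2


theorem chordedCycle_j2_embeds_iff_odd (k n : ℕ) (hk : Odd k) (hn : 4 ≤ n) :
    EmbedsInKStar (chordedCycleEdges n 2) k ↔ n ≤ (k + 1).choose 2 - 3 := by
  constructor
  · intro h
    unfold EmbedsInKStar chordedCycleEdges at h
    exact CC.embeds_bound hk hn h
  · intro hb
    obtain ⟨t, ht⟩ := hk
    rcases Nat.lt_or_ge t 2 with h2 | h2
    · exfalso
      have hc : (k+1).choose 2 ≤ 6 := by
        calc (k+1).choose 2 ≤ (4).choose 2 := Nat.choose_le_choose 2 (by omega)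
        _ = 6 := by decide
      omega
    · have hub : n ≤ (5+2*(t-2)+1).choose 2 - 3 := by
        rw [show 5+2*(t-2)+1 = k+1 by omega]
        exact hb
      have hs := CC2.Qall (t-2) n hn hub
      have hk5 : 5 + 2*(t-2) = k := by omega
      exact CC.spec_embeds hn (hk5 ▸ hs)
end
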